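/- arXiv:2601.00250 — 6 statements merged into one kernel-verified Lean document; each statement's English description precedes it below -/
import Mathlib

section
/- Let C be a linear [n,k]_q code with minimum Hamming distance d. Then n ≥ Σ_{i=0}^{k-1} ⌈d/q^i⌉ (the Griesmer bound). -/
open Module

/-- The Hamming weight of a vector: the number of its non-zero coordinates. -/
def hwt {n : ℕ} {F : Type*} [Zero F] [DecidableEq F] (c : Fin n → F) : ℕ :=
  (Finset.univ.filter fun i => c i ≠ 0).card

section GriesmerAux

variable {F : Type*} [Field F] [Fintype F] [DecidableEq F]

/-- weight on a general fintype index -/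
def gwt {ι : Type*} [Fintype ι] (c : ι → F) : ℕ :=
  (Finset.univ.filter fun i => c i ≠ 0).card

omit [Fintype F] in
lemma gwt_le_card {ι : Type*} [Fintype ι] (c : ι → F) : gwt c ≤ Fintype.card ι := by
  rw [gwt, ← Finset.card_univ]
  exact Finset.card_filter_le _ _

omit [Fintype F] in
lemma gwt_pos {ι : Type*} [Fintype ι] {c : ι → F} (hc : c ≠ 0) : 1 ≤ gwt c := by
  obtain ⟨i, hi⟩ : ∃ i, c i ≠ 0 := Function.ne_iff.mp hc
  have hmem : i ∈ Finset.univ.filter (fun j => c j ≠ 0) := by simp [hi]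
  have := Finset.card_pos.mpr ⟨i, hmem⟩
  rw [gwt]; omega

lemma griesmer_aux (k : ℕ) : ∀ (ι : Type) (_ : Fintype ι) (d : ℕ)
    (C : Submodule F (ι → F)), finrank F C = k + 1 →
    (∀ c ∈ C, c ≠ 0 → d ≤ gwt c) →
    ∑ i ∈ Finset.range (k+1), ⌈(d : ℚ) / (Fintype.card F : ℚ) ^ i⌉₊ ≤ Fintype.card ι := by
  induction k with
  | zero =>
    intro ι _ d C hdim hmin
    have hC : C ≠ ⊥ := by
      intro h; rw [h] at hdim; simp at hdim
    obtain ⟨x, hxC, hx0⟩ := Submodule.exists_mem_ne_zero_of_ne_bot hC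
    have := hmin x hxC hx0
    have h2 := gwt_le_card (F := F) x
    rw [Finset.sum_range_one]
    rw [pow_zero, div_one, Nat.ceil_natCast]
    omega
  | succ k ih =>
    intro ι _ d C hdim hmin
    classical
    set q := Fintype.card F with hq
    have hq1 : 1 ≤ q := Fintype.card_pos
    have hC : C ≠ ⊥ := by intro h; rw [h] at hdim; simp at hdim
    obtain ⟨x₁, hx₁C, hx₁0⟩ := Submodule.exists_mem_ne_zero_of_ne_bot hC
    set W : Set ℕ := {m | ∃ x ∈ C, x ≠ 0 ∧ gwt x = m} with hWdef
    have hWne : W.Nonempty := ⟨gwt x₁, x₁, hx₁C, hx₁0, rfl⟩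
    set w := sInf W with hwdef
    obtain ⟨x₀, hx₀C, hx₀0, hx₀w⟩ := Nat.sInf_mem hWne
    have hminw : ∀ z ∈ C, z ≠ 0 → w ≤ gwt z := fun z hz hz0 => Nat.sInf_le ⟨z, hz, hz0, rfl⟩
    have hdw : d ≤ w := by rw [hwdef, ← hx₀w]; exact hmin x₀ hx₀C hx₀0
    set S : Finset ι := Finset.univ.filter (fun i => x₀ i ≠ 0) with hS
    have hScard : S.card = w := hx₀w
    have hw1 : 1 ≤ w := by rw [hwdef, ← hx₀w]; exact gwt_pos hx₀0
    -- residual code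
    let ι' := {i : ι // x₀ i = 0}
    let φ : (ι → F) →ₗ[F] (ι' → F) := LinearMap.funLeft F F (fun i : ι' => (i : ι))
    let ψ : C →ₗ[F] (ι' → F) := φ ∘ₗ C.subtype
    have hφx₀ : φ x₀ = 0 := by funext i; exact i.2
    -- kernel of ψ is the span of x₀
    have hker : LinearMap.ker ψ = Submodule.span F {(⟨x₀, hx₀C⟩ : C)} := by
      apply le_antisymm
      · rintro ⟨z, hzC⟩ hz
        have hz' : ∀ i : ι', z (i : ι) = 0 := fun i => congrFun hz i
        obtain ⟨i₀, hi₀⟩ : ∃ i, x₀ i ≠ 0 := Function.ne_iff.mp hx₀0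
        have hi₀S : i₀ ∈ S := by simp [hS, hi₀]
        set μ := z i₀ / x₀ i₀ with hμ
        set y : ι → F := z - μ • x₀ with hy
        have hyC : y ∈ C := C.sub_mem hzC (C.smul_mem μ hx₀C)
        have hy0 : y = 0 := by
          by_contra hne
          have h1 : w ≤ gwt y := hminw y hyC hne
          have h2 : Finset.univ.filter (fun i => y i ≠ 0) ⊆ S.erase i₀ := by
            intro i hi
            simp only [Finset.mem_filter, Finset.mem_univ, true_and] at hi
            rw [Finset.mem_erase]
            constructor
            · rintro rfl
              apply hi
              simp [hy, hμ, div_mul_cancel₀ _ hi₀]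
            · simp only [hS, Finset.mem_filter, Finset.mem_univ, true_and]
              intro hx0i
              apply hi
              by_cases hzi : x₀ i = 0
              · simp [hy, hz' ⟨i, hzi⟩, hzi]
              · exact absurd hx0i hzi
          have h3 : gwt y ≤ w - 1 := by
            calc gwt y ≤ (S.erase i₀).card := Finset.card_le_card h2
            _ = S.card - 1 := Finset.card_erase_of_mem hi₀S
            _ = w - 1 := by rw [hScard]
          omega
        have hzμ : z = μ • x₀ := by rwa [hy, sub_eq_zero] at hy0
        apply Submodule.mem_span_singleton.mpr
        exact ⟨μ, by ext; simp [hzμ]⟩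
      · rw [Submodule.span_singleton_le_iff_mem, LinearMap.mem_ker]
        show φ x₀ = 0
        exact hφx₀
    have hx₀ne : (⟨x₀, hx₀C⟩ : C) ≠ 0 := by
      intro h
      exact hx₀0 (congrArg Subtype.val h)
    have hkerrank : finrank F (LinearMap.ker ψ) = 1 := by
      rw [hker]; exact finrank_span_singleton hx₀ne
    have hrange : finrank F (LinearMap.range ψ) = k + 1 := by
      have := LinearMap.finrank_range_add_finrank_ker ψ
      rw [hdim, hkerrank] at this
      omega
    -- min distance of residual code
    set d' : ℕ := ⌈(d : ℚ) / (q : ℚ)⌉₊ with hd'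
    have hmind' : ∀ y ∈ LinearMap.range ψ, y ≠ 0 → d' ≤ gwt y := by
      rintro y ⟨⟨x, hxC⟩, rfl⟩ hy0
      have hyx : ∀ j : ι', ψ ⟨x, hxC⟩ j = x (j : ι) := fun j => rfl
      have key : ∀ μ : F, (S.filter (fun i => x i = μ * x₀ i)).card ≤ gwt (ψ ⟨x, hxC⟩) := by
        intro μ
        set z : ι → F := x - μ • x₀ with hz
        have hzx : ∀ i, z i = x i - μ * x₀ i := fun i => rfl
        have hzC : z ∈ C := C.sub_mem hxC (C.smul_mem μ hx₀C)
        have hz0 : z ≠ 0 := by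
          intro h
          apply hy0
          funext j
          have h1 : z (j : ι) = 0 := by rw [h]; rfl
          rw [hzx] at h1
          rw [j.2, mul_zero, sub_zero] at h1
          rw [hyx j, h1]
          rfl
        have hwz : w ≤ gwt z := hminw z hzC hz0
        have hsplit : (Finset.univ.filter (fun i => z i ≠ 0 ∧ x₀ i = 0)).card
            + (Finset.univ.filter (fun i => z i ≠ 0 ∧ ¬ x₀ i = 0)).card = gwt z := by
          rw [gwt, ← Finset.filter_filter, ← Finset.filter_filter]
          exact Finset.card_filter_add_card_filter_not _
        have hB : (Finset.univ.filter (fun i => z i ≠ 0 ∧ x₀ i = 0)).card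
            = gwt (ψ ⟨x, hxC⟩) := by
          rw [gwt]
          refine Finset.card_bij'
            (fun a ha => (⟨a, by
              simp only [Finset.mem_filter, Finset.mem_univ, true_and] at ha
              exact ha.2⟩ : ι'))
            (fun b _ => (b : ι)) ?_ ?_ ?_ ?_
          · intro a ha
            simp only [Finset.mem_filter, Finset.mem_univ, true_and] at ha ⊢
            rw [hyx]
            have := ha.1
            rwa [hzx, ha.2, mul_zero, sub_zero] at this
          · intro b hb
            simp only [Finset.mem_filter, Finset.mem_univ, true_and] at hb ⊢
            rw [hyx] at hb
            refine ⟨?_, b.2⟩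
            rwa [hzx, b.2, mul_zero, sub_zero]
          · intros; rfl
          · intros; rfl
        have hA : Finset.univ.filter (fun i => z i ≠ 0 ∧ ¬ x₀ i = 0)
            = S.filter (fun i => ¬ x i = μ * x₀ i) := by
          rw [hS, Finset.filter_filter]
          ext i
          simp only [Finset.mem_filter, Finset.mem_univ, true_and, hzx, sub_ne_zero]
          tauto
        have h2 := Finset.card_filter_add_card_filter_not
          (s := S) (fun i => x i = μ * x₀ i)
        rw [hA] at hsplit
        rw [hB] at hsplit
        rw [hScard] at h2
        omega
      -- sum over μ
      have hsum : ∑ μ : F, (S.filter (fun i => x i = μ * x₀ i)).card = w := by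
        rw [← hScard]
        rw [Finset.card_eq_sum_card_fiberwise (f := fun i => x i / x₀ i)
          (t := Finset.univ) (fun i _ => Finset.mem_univ _)]
        apply Finset.sum_congr rfl
        intro μ _
        congr 1
        apply Finset.filter_congr
        intro i hi
        simp only [hS, Finset.mem_filter, Finset.mem_univ, true_and] at hi
        rw [div_eq_iff hi]
      have hqle : w ≤ q * gwt (ψ ⟨x, hxC⟩) := by
        calc w = ∑ μ : F, (S.filter (fun i => x i = μ * x₀ i)).card := hsum.symm
        _ ≤ ∑ _μ : F, gwt (ψ ⟨x, hxC⟩) := Finset.sum_le_sum (fun μ _ => key μ)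
        _ = q * gwt (ψ ⟨x, hxC⟩) := by rw [Finset.sum_const, Finset.card_univ, smul_eq_mul]
      rw [hd', Nat.ceil_le, div_le_iff₀ (by positivity)]
      have h5 : d ≤ q * gwt (ψ ⟨x, hxC⟩) := le_trans hdw hqle
      have h6 : (d : ℚ) ≤ (q : ℚ) * (gwt (ψ ⟨x, hxC⟩) : ℚ) := by exact_mod_cast h5
      linarith
    -- apply IH
    have hIH := ih ι' inferInstance d' (LinearMap.range ψ) hrange hmind'
    have hcard' : Fintype.card ι' = Fintype.card ι - w := by
      have h1 : Fintype.card ι' = (Finset.univ.filter (fun i => x₀ i = 0)).card :=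
        Fintype.card_subtype _
      have h2 := Finset.card_filter_add_card_filter_not
        (s := (Finset.univ : Finset ι)) (fun i => x₀ i = 0)
      rw [Finset.card_univ] at h2
      have h3 : (Finset.univ.filter (fun i => ¬ x₀ i = 0)).card = w := hScard
      omega
    have hwn : w ≤ Fintype.card ι := by
      rw [← hScard, ← Finset.card_univ]; exact Finset.card_filter_le _ _
    -- final computation
    rw [Finset.sum_range_succ']
    have hterm : ∀ i, ⌈(d : ℚ) / (q : ℚ) ^ (i + 1)⌉₊ ≤ ⌈(d' : ℚ) / (q : ℚ) ^ i⌉₊ := by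
      intro i
      apply Nat.ceil_le_ceil
      rw [pow_succ', ← div_div]
      exact (div_le_div_iff_of_pos_right (by positivity)).mpr (Nat.le_ceil _)
    have h0 : ⌈(d : ℚ) / (q : ℚ) ^ 0⌉₊ = d := by rw [pow_zero, div_one, Nat.ceil_natCast]
    calc ∑ i ∈ Finset.range (k + 1), ⌈(d : ℚ) / (q : ℚ) ^ (i + 1)⌉₊ + ⌈(d : ℚ) / (q : ℚ) ^ 0⌉₊
        ≤ ∑ i ∈ Finset.range (k + 1), ⌈(d' : ℚ) / (q : ℚ) ^ i⌉₊ + w := by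
          rw [h0]; exact Nat.add_le_add (Finset.sum_le_sum fun i _ => hterm i) hdw
      _ ≤ (Fintype.card ι - w) + w := by
          rw [← hcard']; exact Nat.add_le_add_right hIH w
      _ ≤ Fintype.card ι := by omega

end GriesmerAux

/-- The Griesmer bound: a linear `[n,k]_q` code with minimum Hamming distance `d`
satisfies `n ≥ Σ_{i=0}^{k-1} ⌈d/q^i⌉`. -/
theorem stmt3 {F : Type*} [Field F] [Fintype F] [DecidableEq F] {n k d : ℕ}
    (C : Submodule F (Fin n → F)) (hdim : finrank F C = k) (hk : 1 ≤ k)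
    (hmin : ∀ c ∈ C, c ≠ 0 → d ≤ hwt c)
    (hex : ∃ c ∈ C, c ≠ 0 ∧ hwt c = d) :
    ∑ i ∈ Finset.range k, ⌈(d : ℚ) / (Fintype.card F : ℚ) ^ i⌉₊ ≤ n := by
  obtain ⟨k', rfl⟩ : ∃ k', k = k' + 1 := ⟨k - 1, by omega⟩
  have h := griesmer_aux k' (Fin n) inferInstance d C hdim
    (fun c hc h0 => hmin c hc h0)
  simpa using h
end

section
/- Let C be a linear [n,k]_q code and 1 ≤ r ≤ k. Let d_r be the r-th generalized Hamming weight of C, i.e., the minimum size of the support of an r-dimensional subcode of C. Then n ≥ d_r + Σ_{i=1}^{k-r} ⌈d_r / (q^i · v_r)⌉, where v_r = (q^r - 1)/(q - 1). -/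
/-!
Averaging over the hyperplanes of an `m`-dimensional subcode `E` (there are `v_m` of them, and
each position of `supp E` leaves the support of exactly one) gives a hyperplane `H` with
`|supp E| ≤ v_m · |supp E \ supp H|`. Descending from `E` to an `r`-dimensional subcode along
such hyperplanes shows `d_r · v_{r+j} ≤ q^j v_r · |supp E|` when `dim E = r + j`; combined with
the first bound, the support shrinks by at least `⌈d_r / (q^j v_r)⌉` in the step from `E` to
`H`. Summing these drops along a chain from `C` down to dimension `r` gives the bound.
-/

open Module

def codeSupp {n : ℕ} {F : Type*} [Field F] (D : Submodule F (Fin n → F)) : Set (Fin n) :=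
  {i : Fin n | ∃ c ∈ D, c i ≠ 0}

open Finset

/-- The number `1 + q + ⋯ + q^(m-1)` of points of `PG(m-1, q)`; the statement's `v_r` is
`projPoints q r`. -/
def projPoints (q m : ℕ) : ℕ := ∑ i ∈ range m, q ^ i

lemma projPoints_succ (q m : ℕ) : projPoints q (m + 1) = q * projPoints q m + 1 :=
  geom_sum_succ

lemma projPoints_pos (q : ℕ) {m : ℕ} (hm : m ≠ 0) : 0 < projPoints q m := by
  obtain ⟨m, rfl⟩ := Nat.exists_eq_succ_of_ne_zero hm
  rw [projPoints_succ]
  exact Nat.succ_pos _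

lemma projPoints_eq_div {q : ℕ} (hq : 2 ≤ q) (m : ℕ) :
    projPoints q m = (q ^ m - 1) / (q - 1) :=
  Nat.geomSum_eq hq m

lemma sub_one_mul_projPoints {q : ℕ} (hq : 2 ≤ q) (m : ℕ) :
    (q - 1) * projPoints q m = q ^ m - 1 := by
  rw [projPoints_eq_div hq]
  exact Nat.mul_div_cancel' (Nat.sub_one_dvd_pow_sub_one q m)

lemma Nat.ceil_div_le_of_le_mul {a b c : ℕ} (h : a ≤ c * b) : ⌈(a : ℚ) / b⌉₊ ≤ c := by
  rcases Nat.eq_zero_or_pos b with rfl | hb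
  · simp
  rw [Nat.ceil_le, div_le_iff₀ (by exact_mod_cast hb)]
  exact_mod_cast h

section Subcode

variable {F : Type*} [Field F] {n : ℕ}

lemma codeSupp_mono {D E : Submodule F (Fin n → F)} (h : D ≤ E) :
    codeSupp D ⊆ codeSupp E := by
  rintro i ⟨c, hc, hci⟩
  exact ⟨c, h hc, hci⟩

lemma ncard_codeSupp_le (D : Submodule F (Fin n → F)) : (codeSupp D).ncard ≤ n := by
  simpa using Set.ncard_le_ncard (Set.subset_univ (codeSupp D))

def subcodeKer (E : Submodule F (Fin n → F)) (φ : Dual F E) : Submodule F (Fin n → F) :=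
  (LinearMap.ker φ).map E.subtype

lemma subcodeKer_le (E : Submodule F (Fin n → F)) (φ : Dual F E) : subcodeKer E φ ≤ E :=
  Submodule.map_subtype_le E _

lemma finrank_subcodeKer_add_one {E : Submodule F (Fin n → F)} {φ : Dual F E} (hφ : φ ≠ 0) :
    finrank F (subcodeKer E φ) + 1 = finrank F E := by
  rw [subcodeKer, Submodule.finrank_map_subtype_eq]
  exact Dual.finrank_ker_add_one_of_ne_zero hφ

def coordAt (E : Submodule F (Fin n → F)) (i : Fin n) : Dual F E :=
  LinearMap.proj i ∘ₗ E.subtype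

lemma coordAt_ne_zero {E : Submodule F (Fin n → F)} {i : Fin n} (hi : i ∈ codeSupp E) :
    coordAt E i ≠ 0 := by
  obtain ⟨c, hc, hci⟩ := hi
  intro h
  exact hci (LinearMap.congr_fun h ⟨c, hc⟩)

lemma not_mem_codeSupp_subcodeKer_smul_coordAt (E : Submodule F (Fin n → F)) (i : Fin n)
    {c : F} (hc : c ≠ 0) : i ∉ codeSupp (subcodeKer E (c • coordAt E i)) := by
  rintro ⟨_, ⟨x, hx, rfl⟩, hxi⟩
  have hx : c * (x : Fin n → F) i = 0 := hx
  exact hxi ((mul_eq_zero.1 hx).resolve_left hc)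

end Subcode

section Griesmer

variable {F : Type*} [Field F] [Fintype F] {n : ℕ}

theorem exists_hyperplane_ncard_codeSupp_le (E : Submodule F (Fin n → F)) {m : ℕ}
    (hE : finrank F E = m + 1) :
    ∃ H ≤ E, finrank F H = m ∧
      (codeSupp E).ncard ≤
        (codeSupp E \ codeSupp H).ncard * projPoints (Fintype.card F) (m + 1) := by
  classical
  set q := Fintype.card F
  have hq : 2 ≤ q := Fintype.one_lt_card
  have : Finite (Dual F E) := Module.finite_of_finite F
  let _ : Fintype (Dual F E) := Fintype.ofFinite _
  let S : Finset (Dual F E) := univ.erase 0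
  have hS : #S = (q - 1) * projPoints q (m + 1) := by
    rw [card_erase_of_mem (mem_univ _), card_univ, card_eq_pow_finrank (K := F),
      Subspace.dual_finrank_eq, hE, sub_one_mul_projPoints hq]
  have hSne : S.Nonempty := by
    rw [← card_pos, hS]
    exact Nat.mul_pos (by omega) (projPoints_pos q m.succ_ne_zero)
  let lost (φ : Dual F E) := codeSupp E \ codeSupp (subcodeKer E φ)
  obtain ⟨φ, hφS, hφmax⟩ := S.exists_max_image (fun φ => (lost φ).ncard) hSne
  refine ⟨subcodeKer E φ, subcodeKer_le E φ, ?_, ?_⟩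
  · have := finrank_subcodeKer_add_one (ne_of_mem_erase hφS)
    omega
  let t := (codeSupp E).toFinset
  -- `i ∈ supp E` leaves the support of `ker φ` at least for the `q - 1` multiples `φ` of the
  -- `i`-th coordinate, so some `φ ∈ S` loses at least `|supp E| / v_{m+1}` positions.
  let leaves (φ : Dual F E) (i : Fin n) := i ∉ codeSupp (subcodeKer E φ)
  have hcount := card_nsmul_le_card_nsmul' (s := S) (t := t) leaves
    (n := q - 1) (m := (lost φ).ncard) ?_ ?_
  · rw [smul_eq_mul, smul_eq_mul, hS, ← Set.ncard_eq_toFinset_card',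
      mul_comm, mul_assoc] at hcount
    rw [mul_comm]
    exact Nat.le_of_mul_le_mul_left hcount (by omega)
  · intro i hi
    have hi := Set.mem_toFinset.1 hi
    refine le_of_eq_of_le ?_ (card_le_card_of_injOn (fun c : F => c • coordAt E i)
      (s := univ.erase 0) ?_ ?_)
    · rw [card_erase_of_mem (mem_univ _), card_univ]
    · intro c hc
      simp only [coe_erase, coe_univ, Set.mem_sdiff, Set.mem_univ, Set.mem_singleton_iff,
        true_and] at hc
      simp [S, leaves, hc, coordAt_ne_zero hi, not_mem_codeSupp_subcodeKer_smul_coordAt]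
    · intro c _ c' _ h
      exact smul_left_injective F (coordAt_ne_zero hi) h
  · intro φ' hφ'
    have hlost : (t.bipartiteAbove leaves φ' : Set (Fin n)) = lost φ' := by
      ext
      simp [t, lost, leaves]
    rw [← Set.ncard_coe_finset, hlost]
    exact hφmax φ' hφ'

theorem exists_hyperplane_ncard_codeSupp_mul_le (E : Submodule F (Fin n → F)) {m : ℕ}
    (hE : finrank F E = m + 1) :
    ∃ H ≤ E, finrank F H = m ∧
      (codeSupp H).ncard * projPoints (Fintype.card F) (m + 1) ≤
        (codeSupp E).ncard * (Fintype.card F * projPoints (Fintype.card F) m) := by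
  obtain ⟨H, hHE, hH, hlost⟩ := exists_hyperplane_ncard_codeSupp_le E hE
  refine ⟨H, hHE, hH, ?_⟩
  obtain ⟨c, hc⟩ := Nat.exists_eq_add_of_le (Set.ncard_le_ncard (codeSupp_mono hHE))
  rw [Set.ncard_sdiff (codeSupp_mono hHE), hc, Nat.add_sub_cancel_left, projPoints_succ] at hlost
  rw [hc, projPoints_succ]
  nlinarith

theorem mul_projPoints_le_ncard_codeSupp {r d : ℕ} (hr : r ≠ 0) (j : ℕ)
    (E : Submodule F (Fin n → F)) (hE : finrank F E = r + j)
    (hd : ∀ D ≤ E, finrank F D = r → d ≤ (codeSupp D).ncard) :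
    d * projPoints (Fintype.card F) (r + j) ≤
      (codeSupp E).ncard * (Fintype.card F ^ j * projPoints (Fintype.card F) r) := by
  induction j generalizing E with
  | zero => simpa using Nat.mul_le_mul_right _ (hd E le_rfl hE)
  | succ j ih =>
    set q := Fintype.card F
    obtain ⟨H, hHE, hH, hHE_le⟩ := exists_hyperplane_ncard_codeSupp_mul_le E hE
    have hH_le := ih H hH fun D hD => hd D (hD.trans hHE)
    refine Nat.le_of_mul_le_mul_right ?_ (projPoints_pos q (m := r + j) (by omega))
    calc d * projPoints q (r + (j + 1)) * projPoints q (r + j)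
        = d * projPoints q (r + j) * projPoints q (r + j + 1) := Nat.mul_right_comm _ _ _
      _ ≤ (codeSupp H).ncard * (q ^ j * projPoints q r) * projPoints q (r + j + 1) :=
        Nat.mul_le_mul_right _ hH_le
      _ = (codeSupp H).ncard * projPoints q (r + j + 1) * (q ^ j * projPoints q r) := by ring
      _ ≤ (codeSupp E).ncard * (q * projPoints q (r + j)) * (q ^ j * projPoints q r) :=
        Nat.mul_le_mul_right _ hHE_le
      _ = (codeSupp E).ncard * (q ^ (j + 1) * projPoints q r) * projPoints q (r + j) := by ring

theorem add_sum_ceil_le_ncard_codeSupp {r d : ℕ} (hr : r ≠ 0) (j : ℕ)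
    (E : Submodule F (Fin n → F)) (hE : finrank F E = r + j)
    (hd : ∀ D ≤ E, finrank F D = r → d ≤ (codeSupp D).ncard) :
    d + ∑ i ∈ Icc 1 j,
      ⌈(d : ℚ) / ((Fintype.card F : ℚ) ^ i * (projPoints (Fintype.card F) r : ℚ))⌉₊ ≤
        (codeSupp E).ncard := by
  induction j generalizing E with
  | zero => simpa using hd E le_rfl hE
  | succ j ih =>
    set q := Fintype.card F
    obtain ⟨H, hHE, hH, hlost⟩ := exists_hyperplane_ncard_codeSupp_le E hE
    have hH_le := ih H hH fun D hD => hd D (hD.trans hHE)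
    have hE_le := mul_projPoints_le_ncard_codeSupp hr (j + 1) E hE hd
    set lost := (codeSupp E \ codeSupp H).ncard
    have hd_le : d ≤ lost * (q ^ (j + 1) * projPoints q r) := by
      refine Nat.le_of_mul_le_mul_right ?_ (projPoints_pos q (m := r + j + 1) (by omega))
      calc d * projPoints q (r + j + 1)
          ≤ (codeSupp E).ncard * (q ^ (j + 1) * projPoints q r) := hE_le
        _ ≤ lost * projPoints q (r + j + 1) * (q ^ (j + 1) * projPoints q r) :=
          Nat.mul_le_mul_right _ hlost
        _ = lost * (q ^ (j + 1) * projPoints q r) * projPoints q (r + j + 1) := by ring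
    have hterm := Nat.ceil_div_le_of_le_mul hd_le
    push_cast at hterm
    rw [sum_Icc_succ_top (by omega), ← add_assoc]
    have hlost_eq : lost = (codeSupp E).ncard - (codeSupp H).ncard :=
      Set.ncard_sdiff (codeSupp_mono hHE)
    have hHE_card := Set.ncard_le_ncard (codeSupp_mono hHE)
    omega

end Griesmer

theorem stmt4_general {F : Type*} [Field F] [Fintype F] {n k r dr : ℕ}
    (C : Submodule F (Fin n → F)) (hdim : finrank F C = k)
    (hr1 : 1 ≤ r) (hrk : r ≤ k)
    (hlb : ∀ D : Submodule F (Fin n → F), D ≤ C → finrank F D = r →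
      dr ≤ (codeSupp D).ncard) :
    dr + ∑ i ∈ Finset.Icc 1 (k - r),
      ⌈(dr : ℚ) / ((Fintype.card F : ℚ) ^ i *
        ((((Fintype.card F) ^ r - 1) / (Fintype.card F - 1) : ℕ) : ℚ))⌉₊ ≤ n := by
  have hC : finrank F C = r + (k - r) := by omega
  rw [← projPoints_eq_div Fintype.one_lt_card]
  exact (add_sum_ceil_le_ncard_codeSupp (by omega) (k - r) C hC hlb).trans
    (ncard_codeSupp_le C)

/-- The generalized Griesmer bound: if `C` is a linear `[n,k]_q` code, `1 ≤ r ≤ k`, and `dr`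
is the `r`-th generalized Hamming weight of `C` (the minimum support size of an
`r`-dimensional subcode), then `n ≥ dr + Σ_{i=1}^{k-r} ⌈dr/(q^i·v_r)⌉` where
`v_r = (q^r-1)/(q-1)`. -/
theorem stmt4 {F : Type*} [Field F] [Fintype F] {n k r dr : ℕ}
    (C : Submodule F (Fin n → F)) (hdim : finrank F C = k)
    (hr1 : 1 ≤ r) (hrk : r ≤ k)
    (hlb : ∀ D : Submodule F (Fin n → F), D ≤ C → finrank F D = r →
      dr ≤ (codeSupp D).ncard)
    (hex : ∃ D : Submodule F (Fin n → F), D ≤ C ∧ finrank F D = r ∧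
      (codeSupp D).ncard = dr) :
    dr + ∑ i ∈ Finset.Icc 1 (k - r),
      ⌈(dr : ℚ) / ((Fintype.card F : ℚ) ^ i *
        ((((Fintype.card F) ^ r - 1) / (Fintype.card F - 1) : ℕ) : ℚ))⌉₊ ≤ n :=
  stmt4_general C hdim hr1 hrk hlb
end

section
/- For every k ≥ 5, the maximal size of a set (or multiset) of points in PG(k-1,2) such that every subspace of projective dimension k-3 (codimension 2) contains at most k-2 points equals k+1; i.e., m_2^{(k-3)}(k, k-2) = k+1. The lower bound is attained by a projective frame: the k points spanned by the unit vectors of F_2^k together with the point spanned by the all-ones vector. -/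
open Module

/-- Multiplicity of a subspace `S` with respect to a multiset of points `K` of `PG(k-1,2)`. -/
noncomputable def msMult {k : ℕ}
    (K : Submodule (ZMod 2) (Fin k → ZMod 2) → ℕ)
    (S : Submodule (ZMod 2) (Fin k → ZMod 2)) : ℕ :=
  ∑ᶠ P ∈ {P : Submodule (ZMod 2) (Fin k → ZMod 2) | finrank (ZMod 2) P = 1 ∧ P ≤ S}, K P

open Classical in
/-- The projective frame of `PG(k-1,2)`: the points spanned by the `k` unit vectors of
`F_2^k` together with the point spanned by the all-ones vector, as a multiset. -/
noncomputable def frameK (k : ℕ) : Submodule (ZMod 2) (Fin k → ZMod 2) → ℕ :=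
  fun P => if (∃ v ∈ (insert (fun _ => 1) (Set.range fun i => Pi.single i 1) :
      Set (Fin k → ZMod 2)), P = Submodule.span (ZMod 2) {v}) then 1 else 0

/-!
Every `k` of the `k + 1` frame vectors are linearly independent, so a subspace of dimension
`k - 2` contains at most `k - 2` of them.

Conversely, over `𝔽₂` a point is the same as a nonzero vector, so a multiset of points of total
multiplicity at least `k + 2` provides vectors `x₁, …, x_{k+2}`, possibly repeated. Their linear
relations form a binary code of length `k + 2` and dimension at least `2`. For two distinct nonzero
codewords `a`, `b`, the weights of `a`, `b` and `a + b` add up to at most `2 (k + 2)`, so for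
`k ≥ 5` one of them has weight at most `k - 1`. Its support, padded to `k - 1` indices, gives
`k - 1` of the `x_i` spanning a space of dimension at most `k - 2`, hence a subspace of
codimension `2` of multiplicity at least `k - 1`.
-/

open Submodule Finset

theorem Submodule.exists_le_finrank_eq {K V : Type*} [DivisionRing K] [AddCommGroup V]
    [Module K V] [FiniteDimensional K V] (W : Submodule K V) {d : ℕ}
    (hW : finrank K W ≤ d) (hd : d ≤ finrank K V) :
    ∃ S : Submodule K V, W ≤ S ∧ finrank K S = d := by
  obtain ⟨m, hm⟩ := Nat.exists_eq_add_of_le hW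
  induction m generalizing W with
  | zero => exact ⟨W, le_rfl, hm.symm⟩
  | succ m ih =>
    have hlt : W < ⊤ := lt_top_iff_ne_top.2 fun h => by
      rw [h, finrank_top] at hm; omega
    obtain ⟨v, -, hv⟩ := SetLike.exists_of_lt hlt
    obtain ⟨S, hWS, hS⟩ := ih (W ⊔ span K {v})
      (by rw [finrank_sup_span_singleton hv]; omega) (by rw [finrank_sup_span_singleton hv]; omega)
    exact ⟨S, le_sup_left.trans hWS, hS⟩

theorem Submodule.exists_mem_ne_zero_ne_of_one_lt_finrank {K V : Type*} [DivisionRing K]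
    [AddCommGroup V] [Module K V] {W : Submodule K V} (hW : 1 < finrank K W) :
    ∃ a ∈ W, ∃ b ∈ W, a ≠ 0 ∧ b ≠ 0 ∧ a ≠ b := by
  have hbot : W ≠ ⊥ := fun h => by rw [h, finrank_bot] at hW; omega
  obtain ⟨a, haW, ha⟩ := exists_mem_ne_zero_of_ne_bot hbot
  have hlt : span K {a} < W := by
    refine lt_of_le_of_ne ((span_singleton_le_iff_mem a W).2 haW) fun h => ?_
    rw [← h, finrank_span_singleton ha] at hW
    omega
  obtain ⟨b, hbW, hb⟩ := SetLike.exists_of_lt hlt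
  exact ⟨a, haW, b, hbW, ha, fun h => hb (h ▸ zero_mem _),
    fun h => hb (h ▸ mem_span_singleton_self a)⟩

theorem setOf_finrank_eq_one_le_eq_image {K V : Type*} [DivisionRing K] [AddCommGroup V]
    [Module K V] (S : Submodule K V) :
    {P : Submodule K V | finrank K P = 1 ∧ P ≤ S} =
      (fun v => span K {v}) '' {v | v ∈ S ∧ v ≠ 0} := by
  ext P
  constructor
  · rintro ⟨hP, hPS⟩
    have hbot : P ≠ ⊥ := fun h => by rw [h, finrank_bot] at hP; omega
    obtain ⟨v, hvP, hv⟩ := exists_mem_ne_zero_of_ne_bot hbot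
    exact ⟨v, ⟨hPS hvP, hv⟩, (eq_span_singleton_of_mem_of_finrank_eq_one hP hvP hv).symm⟩
  · rintro ⟨v, ⟨hvS, hv⟩, rfl⟩
    exact ⟨finrank_span_singleton hv, (span_singleton_le_iff_mem v S).2 hvS⟩

theorem injOn_span_singleton_zmod_two {V : Type*} [AddCommGroup V] [Module (ZMod 2) V] :
    Set.InjOn (fun v : V => span (ZMod 2) {v}) {v | v ≠ 0} := by
  intro v hv w _ (h : span (ZMod 2) {v} = span (ZMod 2) {w})
  obtain ⟨c, rfl⟩ := mem_span_singleton.1 (h ▸ mem_span_singleton_self v)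
  fin_cases c
  · exact absurd (zero_smul _ w) hv
  · exact one_smul _ w

theorem hammingNorm_add_hammingNorm_add_hammingNorm_add_le {ι : Type*} [Fintype ι]
    (a b : ι → ZMod 2) :
    hammingNorm a + hammingNorm b + hammingNorm (a + b) ≤ 2 * Fintype.card ι := by
  have key : ∀ x y : ZMod 2,
      (if x ≠ 0 then 1 else 0) + (if y ≠ 0 then 1 else 0) + (if x + y ≠ 0 then 1 else 0) ≤ 2 := by
    decide
  simp only [hammingNorm, card_filter, ← sum_add_distrib, Pi.add_apply]
  calc _ ≤ ∑ _i : ι, 2 := sum_le_sum fun i _ => key (a i) (b i)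
    _ = 2 * Fintype.card ι := by rw [sum_const, card_univ, smul_eq_mul, mul_comm]

section Dependency

variable {ι V : Type*} [Fintype ι] [AddCommGroup V] [Module (ZMod 2) V]
  [FiniteDimensional (ZMod 2) V]

theorem exists_mem_ker_hammingNorm_le (x : ι → V)
    (hι : Fintype.card ι = finrank (ZMod 2) V + 2) (hV : 5 ≤ finrank (ZMod 2) V) :
    ∃ c ∈ LinearMap.ker (Fintype.linearCombination (ZMod 2) x), c ≠ 0 ∧
      hammingNorm c ≤ finrank (ZMod 2) V - 1 := by
  set φ := Fintype.linearCombination (ZMod 2) x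
  have hker : 1 < finrank (ZMod 2) (LinearMap.ker φ) := by
    have := φ.finrank_range_add_finrank_ker
    have := (LinearMap.range φ).finrank_le
    rw [finrank_fintype_fun_eq_card] at *
    omega
  obtain ⟨a, ha, b, hb, ha0, hb0, hab⟩ := exists_mem_ne_zero_ne_of_one_lt_finrank hker
  have hab0 : a + b ≠ 0 := fun h =>
    hab (eq_of_sub_eq_zero (by rwa [sub_eq_add_neg, ZModModule.neg_eq_self]))
  have := hammingNorm_add_hammingNorm_add_hammingNorm_add_le a b
  by_cases h1 : hammingNorm a ≤ finrank (ZMod 2) V - 1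
  · exact ⟨a, ha, ha0, h1⟩
  by_cases h2 : hammingNorm b ≤ finrank (ZMod 2) V - 1
  · exact ⟨b, hb, hb0, h2⟩
  exact ⟨a + b, add_mem ha hb, hab0, by omega⟩

theorem exists_card_eq_finrank_span_image_le (x : ι → V)
    (hι : Fintype.card ι = finrank (ZMod 2) V + 2) (hV : 5 ≤ finrank (ZMod 2) V) :
    ∃ I : Finset ι, #I = finrank (ZMod 2) V - 1 ∧
      finrank (ZMod 2) (span (ZMod 2) (x '' I)) ≤ finrank (ZMod 2) V - 2 := by
  obtain ⟨c, hc, hc0, hcard⟩ := exists_mem_ker_hammingNorm_le x hι hV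
  obtain ⟨I, hJI, hI⟩ := exists_superset_card_eq hcard (by omega)
  refine ⟨I, hI, ?_⟩
  have hcI : ∀ i ∉ I, c i = 0 := fun i hi => by_contra fun h => hi (hJI (by simpa using h))
  have hdep : ¬ LinearIndepOn (ZMod 2) x (I : Set ι) := by
    rw [linearIndepOn_finset_iff]
    intro h
    have hsum : ∑ i ∈ I, c i • x i = 0 := by
      rw [LinearMap.mem_ker, Fintype.linearCombination_apply] at hc
      rw [← hc]
      exact sum_subset (subset_univ I) fun i _ hi => by rw [hcI i hi, zero_smul]
    exact hc0 (funext fun i => by_cases (h c hsum i) (hcI i))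
  have := mt linearIndependent_iff_card_le_finrank_span.2 hdep
  rw [← Set.image_eq_range] at this
  simp only [Finset.coe_sort_coe, Fintype.card_coe, Set.finrank] at this
  omega

end Dependency

open Classical in
theorem exists_finrank_eq_le_sum_mem {V : Type*} [AddCommGroup V] [Module (ZMod 2) V]
    [Fintype V] (w : V → ℕ) (hw : finrank (ZMod 2) V + 2 ≤ ∑ v, w v) (hV : 5 ≤ finrank (ZMod 2) V) :
    ∃ S : Submodule (ZMod 2) V, finrank (ZMod 2) S = finrank (ZMod 2) V - 2 ∧
      finrank (ZMod 2) V - 1 ≤ ∑ v with v ∈ S, w v := by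
  set n := finrank (ZMod 2) V
  -- `Σ v, Fin (w v)` lists every vector `v` with multiplicity `w v`.
  obtain ⟨e⟩ := Function.Embedding.nonempty_of_card_le (α := Fin (n + 2)) (β := Σ v, Fin (w v))
    (by simpa [Fintype.card_sigma] using hw)
  obtain ⟨I, hI, hspan⟩ :=
    exists_card_eq_finrank_span_image_le (fun j => (e j).1) (Fintype.card_fin _) hV
  obtain ⟨S, hle, hS⟩ := exists_le_finrank_eq _ hspan (by omega)
  refine ⟨S, hS, ?_⟩
  calc n - 1 = #(I.map e) := by rw [card_map, hI]
    _ ≤ #{σ : Σ v, Fin (w v) | σ.1 ∈ S} := card_le_card fun σ hσ => by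
        obtain ⟨j, hj, rfl⟩ := mem_map.1 hσ
        simpa using hle (subset_span ⟨j, hj, rfl⟩)
    _ = ∑ v with v ∈ S, w v := by
        rw [show ({σ : Σ v, Fin (w v) | σ.1 ∈ S} : Finset _) =
          ({v | v ∈ S} : Finset V).sigma fun _ => univ by ext; simp, card_sigma]
        simp

section Frame

def projectiveFrame (F : Type*) [Zero F] [One F] [DecidableEq F] (k : ℕ) : Finset (Fin k → F) :=
  insert (fun _ => 1) (univ.image fun i => Pi.single i 1)

variable {F : Type*} [Field F] {k : ℕ}

theorem const_one_ne_single (hk : 2 ≤ k) (i : Fin k) :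
    (fun _ => 1 : Fin k → F) ≠ Pi.single i 1 := by
  obtain ⟨j, hji⟩ : ∃ j : Fin k, j ≠ i :=
    Fintype.exists_ne_of_one_lt_card (by rw [Fintype.card_fin]; omega) i
  intro h
  simpa [Pi.single_eq_of_ne hji] using congrFun h j

variable [DecidableEq F]

theorem coe_projectiveFrame :
    (projectiveFrame F k : Set (Fin k → F)) =
      insert (fun _ => 1) (Set.range fun i => Pi.single i 1) := by
  simp [projectiveFrame]

theorem card_projectiveFrame (hk : 2 ≤ k) : #(projectiveFrame F k) = k + 1 := by
  rw [projectiveFrame, card_insert_of_notMem, card_image_of_injective _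
    (Pi.linearIndependent_single_one (Fin k) F).injective, card_univ, Fintype.card_fin]
  simpa [eq_comm] using const_one_ne_single hk

theorem zero_notMem_projectiveFrame (hk : 1 ≤ k) : (0 : Fin k → F) ∉ projectiveFrame F k := by
  simp only [projectiveFrame, mem_insert, mem_image, mem_univ, true_and, not_or, not_exists]
  refine ⟨fun h => by simpa using congrFun h ⟨0, hk⟩, fun i h => by simpa using congrFun h i⟩

theorem linearIndepOn_projectiveFrame_erase {u : Fin k → F} (hu : u ∈ projectiveFrame F k) :
    LinearIndepOn F id ((projectiveFrame F k).erase u : Set (Fin k → F)) := by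
  have hli := Pi.linearIndependent_single_one (Fin k) F
  rw [coe_erase, coe_projectiveFrame]
  rw [← mem_coe, coe_projectiveFrame] at hu
  rcases hu with rfl | ⟨j, rfl⟩
  · exact hli.linearIndepOn_id.mono fun v hv => by simp_all
  · refine (LinearIndepOn.id_insert (x := fun _ => 1) (hli.linearIndepOn {j}ᶜ).id_image
      fun hmem => ?_).mono ?_
    · have hle : span F ((fun i => Pi.single i 1) '' {j}ᶜ) ≤
          LinearMap.ker (LinearMap.proj (R := F) (φ := fun _ : Fin k => F) j) :=
        span_le.2 fun v ⟨i, hi, hv⟩ => by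
          subst hv; simp [Pi.single_eq_of_ne (Set.mem_compl_singleton_iff.1 hi).symm]
      simpa using hle hmem
    · rintro v ⟨hv | ⟨i, rfl⟩, hne⟩
      · exact Or.inl hv
      · refine Or.inr ⟨i, fun h => hne ?_, rfl⟩
        rw [Set.mem_singleton_iff.1 h]
        exact Set.mem_singleton _

open Classical in
theorem card_filter_mem_projectiveFrame_le (hk : 2 ≤ k) (S : Submodule F (Fin k → F))
    (hS : finrank F S < k) : #{v ∈ projectiveFrame F k | v ∈ S} ≤ finrank F S := by
  by_contra! h
  obtain ⟨G, hG, hGcard⟩ := exists_subset_card_eq (Nat.succ_le_of_lt h)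
  obtain ⟨u, hu, huG⟩ : ∃ u ∈ projectiveFrame F k, u ∉ G := by
    by_contra! hall
    have := card_le_card hall
    rw [card_projectiveFrame hk] at this
    omega
  have hGli : LinearIndepOn F id (G : Set (Fin k → F)) :=
    (linearIndepOn_projectiveFrame_erase hu).mono fun v hv =>
      mem_erase.2 ⟨fun h => huG (h ▸ hv), (mem_filter.1 (hG hv)).1⟩
  have hGS : span F (G : Set (Fin k → F)) ≤ S :=
    span_le.2 fun v hv => (mem_filter.1 (hG hv)).2
  have := finrank_mono hGS
  rw [finrank_span_finset_eq_card hGli] at this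
  omega

end Frame

open Classical in
noncomputable def pointMult {V : Type*} [AddCommGroup V] [Module (ZMod 2) V]
    (K : Submodule (ZMod 2) V → ℕ) (v : V) : ℕ :=
  if v = 0 then 0 else K (span (ZMod 2) {v})

section Multiplicity

variable {k : ℕ}

open Classical in
theorem msMult_eq_sum_pointMult (K : Submodule (ZMod 2) (Fin k → ZMod 2) → ℕ)
    (S : Submodule (ZMod 2) (Fin k → ZMod 2)) :
    msMult K S = ∑ v with v ∈ S, pointMult K v := by
  rw [msMult, setOf_finrank_eq_one_le_eq_image, finsum_mem_image
    (injOn_span_singleton_zmod_two.mono fun v hv => hv.2)]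
  rw [show {v | v ∈ S ∧ v ≠ 0} = ↑({v | v ∈ S ∧ v ≠ 0} : Finset _) by simp, finsum_mem_coe_finset,
    ← filter_filter, sum_filter (· ≠ 0)]
  exact sum_congr rfl fun v _ => by rw [pointMult, ite_not]; congr

theorem pointMult_frameK (hk : 1 ≤ k) (v : Fin k → ZMod 2) :
    pointMult (frameK k) v = if v ∈ projectiveFrame (ZMod 2) k then 1 else 0 := by
  unfold pointMult frameK
  simp only [← coe_projectiveFrame, mem_coe]
  by_cases hv : v = 0
  · simp [hv, zero_notMem_projectiveFrame hk]
  · refine (if_neg hv).trans (if_congr ⟨?_, fun h => ⟨v, h, rfl⟩⟩ rfl rfl)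
    rintro ⟨w, hw, h⟩
    rwa [injOn_span_singleton_zmod_two hv (fun h0 => zero_notMem_projectiveFrame hk (h0 ▸ hw)) h]

open Classical in
theorem msMult_frameK (hk : 1 ≤ k) (S : Submodule (ZMod 2) (Fin k → ZMod 2)) :
    msMult (frameK k) S = #{v ∈ projectiveFrame (ZMod 2) k | v ∈ S} := by
  rw [msMult_eq_sum_pointMult, sum_congr rfl fun v _ => pointMult_frameK hk v, sum_boole,
    Nat.cast_id, filter_comm, filter_univ_mem]

theorem msMult_top_le (hk : 5 ≤ k) (K : Submodule (ZMod 2) (Fin k → ZMod 2) → ℕ)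
    (hK : ∀ S : Submodule (ZMod 2) (Fin k → ZMod 2), finrank (ZMod 2) S = k - 2 →
      msMult K S ≤ k - 2) :
    msMult K ⊤ ≤ k + 1 := by
  have hdim : finrank (ZMod 2) (Fin k → ZMod 2) = k := by simp
  by_contra! h
  rw [msMult_eq_sum_pointMult] at h
  obtain ⟨S, hS, hsum⟩ := exists_finrank_eq_le_sum_mem (pointMult K)
    (by rw [hdim]; simp only [mem_top, filter_true] at h; omega) (by rw [hdim]; exact hk)
  have := hK S (by rw [hS, hdim])
  rw [msMult_eq_sum_pointMult] at this
  rw [hdim] at hsum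
  omega

end Multiplicity

/-- For `k ≥ 5`, `m_2^{(k-3)}(k, k-2) = k+1`: a projective frame gives `k+1` points of
`PG(k-1,2)` with at most `k-2` points in every subspace of codimension `2`, and no multiset
of points with this property has total multiplicity exceeding `k+1`. -/
theorem stmt10 {k : ℕ} (hk : 5 ≤ k) :
    ((∀ S : Submodule (ZMod 2) (Fin k → ZMod 2), finrank (ZMod 2) S = k - 2 →
        msMult (frameK k) S ≤ k - 2) ∧ msMult (frameK k) ⊤ = k + 1) ∧
    (∀ K : Submodule (ZMod 2) (Fin k → ZMod 2) → ℕ,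
      (∀ S : Submodule (ZMod 2) (Fin k → ZMod 2), finrank (ZMod 2) S = k - 2 →
        msMult K S ≤ k - 2) → msMult K ⊤ ≤ k + 1) := by
  classical
  refine ⟨⟨fun S hS => ?_, ?_⟩, msMult_top_le hk⟩
  · rw [msMult_frameK (by omega), ← hS]
    exact card_filter_mem_projectiveFrame_le (by omega) S (by omega)
  · rw [msMult_frameK (by omega), filter_true_of_mem fun v _ => mem_top,
      card_projectiveFrame (by omega)]
end

section
/- In PG(3,q) with q a prime power, an ovoid (a set of q² + 1 points no three of which are collinear) shows m_q^{(1)}(4, 2) ≥ q² + 1: there exists a set of q² + 1 points in PG(3,q) such that every line contains at most 2 of them. -/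
/-!
Take `b, c` with `t² + b t + c` irreducible over `F` and the quadric
`Q = z w - (x² + b x y + c y²)`. Its points `(x : y : x² + b x y + c y² : 1)` and `(0 : 0 : 1 : 0)`
number `q² + 1`. If a line carried three points `u, v, s u + t v` of `Q`, then
`0 = Q (s u + t v) = s t · polar Q u v` with `s t ≠ 0`, so `Q` would vanish on the whole line.
It does not: the line meets the planes `w = 0` and `z = 0`, anisotropy of `x² + b x y + c y²`
forces these meets to be `(0 : 0 : 1 : 0)` and `(0 : 0 : 0 : 1)`, and `Q` is nonzero at their sum.
-/

open Module Submodule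

section Quadric

variable {F V : Type*} [Field F] [AddCommGroup V] [Module F V]

theorem QuadraticMap.apply_smul_add_smul (Q : QuadraticForm F V) (s t : F) (u v : V) :
    Q (s • u + t • v) = s * s * Q u + t * t * Q v + s * t * polar Q u v := by
  rw [QuadraticMap.map_add Q, Q.map_smul, Q.map_smul, polar_smul_left, polar_smul_right]
  simp only [smul_eq_mul]
  ring

theorem Submodule.notMem_span_singleton_of_span_singleton_ne {u v : V} (hu : u ≠ 0)
    (h : F ∙ u ≠ F ∙ v) : u ∉ F ∙ v := by
  intro huv
  obtain ⟨a, rfl⟩ := mem_span_singleton.1 huv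
  have ha : a ≠ 0 := by rintro rfl; exact hu (zero_smul F v)
  exact h (span_singleton_smul_eq (IsUnit.mk0 a ha) v)

theorem Submodule.span_pair_eq_of_finrank_eq_two {S : Submodule F V} (hS : finrank F S = 2)
    {u v : V} (hu : u ∈ S) (hv : v ∈ S) (huv : LinearIndependent F ![u, v]) :
    span F {u, v} = S := by
  have : Module.Finite F S := Module.finite_of_finrank_pos (by omega)
  apply eq_of_le_of_finrank_eq (span_le.2 (Set.insert_subset hu (Set.singleton_subset_iff.2 hv)))
  rw [hS, ← Matrix.range_cons_cons_empty, finrank_span_eq_card huv, Fintype.card_fin]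

theorem QuadraticMap.eq_zero_of_three_isotropic (Q : QuadraticForm F V) {S : Submodule F V}
    (hS : finrank F S = 2) {u v w : V} (hu : u ∈ S) (hv : v ∈ S) (hw : w ∈ S)
    (huv : LinearIndependent F ![u, v]) (hwu : w ∉ F ∙ u) (hwv : w ∉ F ∙ v)
    (hQu : Q u = 0) (hQv : Q v = 0) (hQw : Q w = 0) {x : V} (hx : x ∈ S) : Q x = 0 := by
  have hspan := span_pair_eq_of_finrank_eq_two hS hu hv huv
  have hpolar : polar Q u v = 0 := by
    obtain ⟨s, t, rfl⟩ := mem_span_pair.1 (hspan ▸ hw)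
    have hs : s ≠ 0 := by
      rintro rfl
      exact hwv (by simpa using smul_mem _ t (mem_span_singleton_self v))
    have ht : t ≠ 0 := by
      rintro rfl
      exact hwu (by simpa using smul_mem _ s (mem_span_singleton_self u))
    simpa [Q.apply_smul_add_smul, hQu, hQv, hs, ht] using hQw
  obtain ⟨a, b, rfl⟩ := mem_span_pair.1 (hspan ▸ hx)
  simp [Q.apply_smul_add_smul, hQu, hQv, hpolar]

theorem QuadraticMap.ncard_isotropic_points_le_two (Q : QuadraticForm F V)
    {A : Set (Submodule F V)} (hA : ∀ P ∈ A, ∃ v ≠ 0, Q v = 0 ∧ P = F ∙ v)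
    {S : Submodule F V} (hS : finrank F S = 2) (hQS : ∃ x ∈ S, Q x ≠ 0) :
    {P ∈ A | P ≤ S}.ncard ≤ 2 := by
  by_contra! h3
  obtain ⟨T, hTA, hT⟩ := Set.exists_subset_card_eq h3
  obtain ⟨P₁, P₂, P₃, h₁₂, h₁₃, h₂₃, rfl⟩ := Set.ncard_eq_three.1 hT
  have hgen : ∀ P ∈ ({P₁, P₂, P₃} : Set _), ∃ v ≠ 0, Q v = 0 ∧ P = F ∙ v ∧ v ∈ S := by
    intro P hP
    obtain ⟨hPA, hPS⟩ := hTA hP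
    obtain ⟨v, hv0, hQv, rfl⟩ := hA P hPA
    exact ⟨v, hv0, hQv, rfl, hPS (mem_span_singleton_self v)⟩
  obtain ⟨u, hu0, hQu, rfl, hu⟩ := hgen P₁ (by simp)
  obtain ⟨v, hv0, hQv, rfl, hv⟩ := hgen P₂ (by simp)
  obtain ⟨w, hw0, hQw, rfl, hw⟩ := hgen P₃ (by simp)
  have huv : LinearIndependent F ![u, v] := linearIndependent_fin2.2
    ⟨hv0, fun a hav => notMem_span_singleton_of_span_singleton_ne hu0 h₁₂
      ((show a • v = u from hav) ▸ smul_mem _ a (mem_span_singleton_self v))⟩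
  obtain ⟨x, hx, hQx⟩ := hQS
  exact hQx (Q.eq_zero_of_three_isotropic hS hu hv hw huv
    (notMem_span_singleton_of_span_singleton_ne hw0 h₁₃.symm)
    (notMem_span_singleton_of_span_singleton_ne hw0 h₂₃.symm) hQu hQv hQw hx)

theorem LinearMap.exists_mem_ne_zero_apply_eq_zero (φ : V →ₗ[F] F) {S : Submodule F V}
    (hS : 1 < finrank F S) : ∃ x ∈ S, x ≠ 0 ∧ φ x = 0 := by
  have : Module.Finite F S := Module.finite_of_finrank_pos (by omega)
  obtain ⟨⟨x, hxS⟩, hx, hx0⟩ := exists_mem_ne_zero_of_ne_bot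
    (LinearMap.ker_ne_bot_of_finrank_lt (f := φ.domRestrict S) (by simpa using hS))
  exact ⟨x, hxS, by simpa using hx0, hx⟩

end Quadric

theorem FiniteField.exists_forall_sq_add_mul_add_ne_zero (F : Type*) [Field F] [Finite F] :
    ∃ b c : F, ∀ t : F, t ^ 2 + b * t + c ≠ 0 := by
  by_contra! h
  -- `(t, b) ↦ (b, -(t² + b t))` would be onto, hence injective, but `(0, 1)`, `(-1, 1)` collide.
  have hsurj : Function.Surjective fun p : F × F => (p.2, -(p.1 ^ 2 + p.2 * p.1)) := by
    rintro ⟨b, c⟩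
    obtain ⟨t, ht⟩ := h b c
    exact ⟨(t, b), Prod.ext rfl (by linear_combination -ht)⟩
  have := Finite.injective_iff_surjective.2 hsurj (a₁ := (0, 1)) (a₂ := (-1, 1)) (by norm_num)
  simp at this

section EllipticQuadric

variable {F : Type*} [Field F]

theorem eq_zero_of_sq_add_mul_add_eq_zero {b c : F} (hf : ∀ t : F, t ^ 2 + b * t + c ≠ 0)
    (x y : F) (h : x ^ 2 + b * x * y + c * y ^ 2 = 0) : x = 0 ∧ y = 0 := by
  by_cases hy : y = 0
  · subst hy
    exact ⟨pow_eq_zero_iff two_ne_zero |>.1 (by linear_combination h), rfl⟩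
  · exact absurd (by field_simp; linear_combination h) (hf (x / y))

def ellipticQuadric (b c : F) : QuadraticForm F (Fin 4 → F) :=
  .proj 2 3 - .proj 0 0 - b • .proj 0 1 - c • .proj 1 1

@[simp]
theorem ellipticQuadric_apply (b c : F) (v : Fin 4 → F) :
    ellipticQuadric b c v = v 2 * v 3 - (v 0 ^ 2 + b * v 0 * v 1 + c * v 1 ^ 2) := by
  simp [ellipticQuadric]
  ring

theorem ellipticQuadric_exists_ne_zero {b c : F} (hf : ∀ t : F, t ^ 2 + b * t + c ≠ 0)
    {S : Submodule F (Fin 4 → F)} (hS : finrank F S = 2) :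
    ∃ x ∈ S, ellipticQuadric b c x ≠ 0 := by
  by_contra! hQ
  obtain ⟨x, hxS, hx, hx₃⟩ :=
    (LinearMap.proj 3).exists_mem_ne_zero_apply_eq_zero (hS ▸ one_lt_two)
  obtain ⟨y, hyS, hy, hy₂⟩ :=
    (LinearMap.proj 2).exists_mem_ne_zero_apply_eq_zero (hS ▸ one_lt_two)
  have hQx := hQ x hxS
  have hQy := hQ y hyS
  simp only [ellipticQuadric_apply, LinearMap.proj_apply] at hQx hQy hx₃ hy₂
  obtain ⟨hx₀, hx₁⟩ :=
    eq_zero_of_sq_add_mul_add_eq_zero hf (x 0) (x 1) (by linear_combination -hQx + x 2 * hx₃)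
  obtain ⟨hy₀, hy₁⟩ :=
    eq_zero_of_sq_add_mul_add_eq_zero hf (y 0) (y 1) (by linear_combination -hQy + y 3 * hy₂)
  have hx₂ : x 2 ≠ 0 := fun h => hx (by ext i; fin_cases i <;> simp [*])
  have hy₃ : y 3 ≠ 0 := fun h => hy (by ext i; fin_cases i <;> simp [*])
  have hQxy := hQ (x + y) (add_mem hxS hyS)
  simp only [ellipticQuadric_apply, Pi.add_apply, hx₀, hx₁, hy₀, hy₁, hx₃, hy₂] at hQxy
  exact mul_ne_zero hx₂ hy₃ (by linear_combination hQxy)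

def ellipticOvoid (b c : F) : Set (Submodule F (Fin 4 → F)) :=
  insert (F ∙ ![0, 0, 1, 0])
    (Set.range fun p : F × F => F ∙ ![p.1, p.2, p.1 ^ 2 + b * p.1 * p.2 + c * p.2 ^ 2, 1])

theorem exists_isotropic_of_mem_ellipticOvoid {b c : F} {P : Submodule F (Fin 4 → F)}
    (hP : P ∈ ellipticOvoid b c) : ∃ v ≠ 0, ellipticQuadric b c v = 0 ∧ P = F ∙ v := by
  rcases hP with rfl | ⟨⟨x, y⟩, rfl⟩
  · exact ⟨_, fun h => by simpa using congrFun h 2, by simp, rfl⟩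
  · exact ⟨_, fun h => by simpa using congrFun h 3, by simp, rfl⟩

theorem ncard_ellipticOvoid [Fintype F] (b c : F) :
    (ellipticOvoid b c).ncard = Fintype.card F ^ 2 + 1 := by
  have hinj : Function.Injective fun p : F × F =>
      F ∙ ![p.1, p.2, p.1 ^ 2 + b * p.1 * p.2 + c * p.2 ^ 2, 1] := by
    rintro ⟨x, y⟩ ⟨x', y'⟩ h
    obtain ⟨z, hz⟩ := span_singleton_eq_span_singleton.1 h
    have hz1 : (z : F) = 1 := by simpa [Units.smul_def] using congrFun hz 3
    simpa [Units.smul_def, hz1] using And.intro (congrFun hz 0) (congrFun hz 1)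
  have hnot : F ∙ ![0, 0, 1, 0] ∉ Set.range fun p : F × F =>
      F ∙ ![p.1, p.2, p.1 ^ 2 + b * p.1 * p.2 + c * p.2 ^ 2, 1] := by
    rintro ⟨p, hp⟩
    obtain ⟨z, hz⟩ := span_singleton_eq_span_singleton.1 hp
    simpa [Units.smul_def] using congrFun hz 3
  rw [ellipticOvoid, Set.ncard_insert_of_notMem hnot, Set.ncard_range_of_injective hinj,
    Nat.card_eq_fintype_card, Fintype.card_prod, sq]

end EllipticQuadric

/-- Existence of an ovoid/cap of size `q² + 1` in `PG(3,q)`: a set of `q² + 1` points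
(one-dimensional subspaces of `F_q^4`) such that every line (2-dimensional linear subspace)
contains at most 2 of them; hence `m_q^{(1)}(4,2) ≥ q² + 1`. -/
theorem stmt12 {F : Type*} [Field F] [Fintype F] :
    ∃ A : Set (Submodule F (Fin 4 → F)),
      (∀ P ∈ A, finrank F P = 1) ∧
      A.ncard = (Fintype.card F) ^ 2 + 1 ∧
      ∀ S : Submodule F (Fin 4 → F), finrank F S = 2 →
        {P ∈ A | P ≤ S}.ncard ≤ 2 := by
  obtain ⟨b, c, hf⟩ := FiniteField.exists_forall_sq_add_mul_add_ne_zero F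
  refine ⟨ellipticOvoid b c, fun P hP => ?_, ncard_ellipticOvoid b c, fun S hS => ?_⟩
  · obtain ⟨v, hv, -, rfl⟩ := exists_isotropic_of_mem_ellipticOvoid hP
    exact finrank_span_singleton hv
  · exact (ellipticQuadric b c).ncard_isotropic_points_le_two
      (fun _ => exists_isotropic_of_mem_ellipticOvoid) hS (ellipticQuadric_exists_ne_zero hf hS)
end

section
/- Let q ≥ 2, k ≥ 2, 1 ≤ r ≤ k−1, and let σ ≥ 1 and ε_r, …, ε_{k−2} be non-negative integers. Set n = σ·v_k − Σ_{i=r}^{k−2} ε_i·v_{i+1} and d_r = v_r·(σ·q^{k−r} − Σ_{i=r}^{k−2} ε_i·q^{i−r+1}). If 0 ≤ ε_i ≤ q−1 for all i and d_r > 0, then n = d_r + Σ_{i=1}^{k−r} ⌈d_r/(q^i·v_r)⌉, i.e., these parameters meet the generalized Griesmer bound with equality. -/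
private lemma geo_nat (q : ℕ) (hq : 1 ≤ q) (t : ℕ) :
    (∑ j ∈ Finset.range t, q ^ j) * (q - 1) + 1 = q ^ t := by
  induction t with
  | zero => simp
  | succ t ih =>
    rw [Finset.sum_range_succ, add_mul, pow_succ]
    have h1 : q ^ t ≤ q ^ t * q := Nat.le_mul_of_pos_right _ (by omega)
    have h2 : q ^ t * (q - 1) = q ^ t * q - q ^ t := by
      rw [Nat.mul_sub, mul_one]
    omega

/-- Solomon–Stiffler type parameters meet the generalized Griesmer bound with equality:
for `q ≥ 2`, `k ≥ 2`, `1 ≤ r ≤ k−1`, `σ ≥ 1` and digits `0 ≤ ε_i ≤ q−1` (`r ≤ i ≤ k−2`),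
setting `n = σ·v_k − Σ_{i=r}^{k−2} ε_i·v_{i+1}` and
`d_r = v_r·(σ·q^{k−r} − Σ_{i=r}^{k−2} ε_i·q^{i−r+1}) > 0` (both stated additively),
one has `n = d_r + Σ_{i=1}^{k−r} ⌈d_r/(q^i·v_r)⌉`. -/
theorem stmt17 (q k r σ dr n : ℕ) (ε : ℕ → ℕ)
    (hq : 2 ≤ q) (hk : 2 ≤ k) (hr1 : 1 ≤ r) (hrk : r ≤ k - 1) (hσ : 1 ≤ σ)
    (hε : ∀ i, r ≤ i → i ≤ k - 2 → ε i ≤ q - 1)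
    (v : ℕ → ℕ) (hv : ∀ m, v m = (q ^ m - 1) / (q - 1))
    (hn : n + ∑ i ∈ Finset.Icc r (k - 2), ε i * v (i + 1) = σ * v k)
    (hd : dr + v r * ∑ i ∈ Finset.Icc r (k - 2), ε i * q ^ (i - r + 1)
        = v r * (σ * q ^ (k - r)))
    (hdr : 0 < dr) :
    n = dr + ∑ i ∈ Finset.Icc 1 (k - r), ⌈(dr : ℚ) / ((q : ℚ) ^ i * (v r : ℚ))⌉₊ := by
  have hq1 : 1 ≤ q := by omega
  set m := k - r with hm
  have hm1 : 1 ≤ m := by omega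
  have hv' : ∀ M, v M = ∑ j ∈ Finset.range M, q ^ j := by
    intro M
    rw [hv]
    have h := geo_nat q hq1 M
    exact Nat.div_eq_of_eq_mul_left (by omega) (by omega)
  have hvr : 0 < v r := by
    rw [hv']
    exact Finset.sum_pos (fun j _ => pow_pos (by omega) j) (by simp; omega)
  -- reindex sums over Icc r (k-2) to Icc 1 (m-1)
  have hre : ∀ f : ℕ → ℕ, ∑ i ∈ Finset.Icc r (k - 2), f i
      = ∑ j ∈ Finset.Icc 1 (m - 1), f (j + (r - 1)) := by
    intro f
    have h : Finset.Icc r (k - 2) = (Finset.Icc 1 (m - 1)).map (addRightEmbedding (r - 1)) := by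
      rw [Finset.map_add_right_Icc]
      congr 1 <;> omega
    rw [h, Finset.sum_map]
    rfl
  rw [hre] at hn hd
  set S := ∑ j ∈ Finset.Icc 1 (m - 1), ε (j + (r - 1)) * q ^ j with hSdef
  set T := ∑ j ∈ Finset.Icc 1 (m - 1), ε (j + (r - 1)) * v j with hTdef
  have h1 : ∑ j ∈ Finset.Icc 1 (m - 1), ε (j + (r - 1)) * q ^ (j + (r - 1) - r + 1) = S := by
    apply Finset.sum_congr rfl
    intro j hj
    simp only [Finset.mem_Icc] at hj
    have hj' : j + (r - 1) - r + 1 = j := by omega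
    rw [hj']
  rw [h1] at hd
  have hvsplit : ∀ j, v (j + r) = v r * q ^ j + v j := by
    intro j
    rw [hv' (j + r), hv' r, hv' j, Finset.sum_range_add]
    have h : ∀ i ∈ Finset.range r, q ^ (j + i) = q ^ j * q ^ i := fun i _ => by
      rw [← pow_add]
    rw [Finset.sum_congr rfl h, ← Finset.mul_sum]
    ring
  have hk' : k = m + r := by omega
  rw [hk', hvsplit m] at hn
  have h2 : ∑ j ∈ Finset.Icc 1 (m - 1), ε (j + (r - 1)) * v (j + (r - 1) + 1)
      = v r * S + T := by
    rw [hSdef, hTdef, Finset.mul_sum, ← Finset.sum_add_distrib]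
    apply Finset.sum_congr rfl
    intro j hj
    have hj1 : j + (r - 1) + 1 = j + r := by omega
    rw [hj1, hvsplit j]
    ring
  rw [h2] at hn
  have hkey : n + T = dr + σ * v m := by
    have hb : σ * (v r * q ^ m + v m) = v r * (σ * q ^ m) + σ * v m := by ring
    rw [hb] at hn
    omega
  -- digit bound for the tails
  have hHib : ∀ i, 1 ≤ i → i ≤ m →
      (∑ j ∈ Finset.Ico i m, ε (j + (r - 1)) * q ^ (j - i)) < q ^ (m - i) := by
    intro i hi1 him
    have hb : (∑ j ∈ Finset.Ico i m, ε (j + (r - 1)) * q ^ (j - i))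
        ≤ ∑ j ∈ Finset.Ico i m, (q - 1) * q ^ (j - i) := by
      apply Finset.sum_le_sum
      intro j hj
      simp only [Finset.mem_Ico] at hj
      exact Nat.mul_le_mul_right _ (hε _ (by omega) (by omega))
    have hb2 : ∑ j ∈ Finset.Ico i m, (q - 1) * q ^ (j - i)
        = (∑ t ∈ Finset.range (m - i), q ^ t) * (q - 1) := by
      rw [Finset.sum_Ico_eq_sum_range, Finset.sum_mul]
      apply Finset.sum_congr rfl
      intro t ht
      have h : i + t - i = t := by omega
      rw [h, mul_comm]
    have hg := geo_nat q hq1 (m - i)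
    omega
  -- the ceiling computation
  have hceil : ∀ i ∈ Finset.Icc 1 m,
      ⌈(dr : ℚ) / ((q : ℚ) ^ i * (v r : ℚ))⌉₊
        = σ * q ^ (m - i) - ∑ j ∈ Finset.Ico i m, ε (j + (r - 1)) * q ^ (j - i) := by
    intro i hi
    simp only [Finset.mem_Icc] at hi
    obtain ⟨hi1, him⟩ := hi
    set Hi := ∑ j ∈ Finset.Ico i m, ε (j + (r - 1)) * q ^ (j - i) with hHidef
    set Lo := ∑ j ∈ Finset.Ico 1 i, ε (j + (r - 1)) * q ^ j with hLodef
    have hIcc : Finset.Icc 1 (m - 1) = Finset.Ico 1 m := by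
      rw [← Finset.Ico_add_one_right_eq_Icc]
      congr 1
      omega
    have hsplit : S = Lo + q ^ i * Hi := by
      rw [hSdef, hIcc, ← Finset.sum_Ico_consecutive _ hi1 him, hLodef, hHidef]
      congr 1
      rw [Finset.mul_sum]
      apply Finset.sum_congr rfl
      intro j hj
      simp only [Finset.mem_Ico] at hj
      have h : q ^ j = q ^ i * q ^ (j - i) := by
        rw [← pow_add]
        congr 1
        omega
      rw [h]
      ring
    have hHi : Hi < q ^ (m - i) := hHib i hi1 him
    have hLo : Lo < q ^ i := by
      have hb : Lo ≤ ∑ j ∈ Finset.Ico 1 i, (q - 1) * q ^ j := by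
        apply Finset.sum_le_sum
        intro j hj
        simp only [Finset.mem_Ico] at hj
        exact Nat.mul_le_mul_right _ (hε _ (by omega) (by omega))
      have hb2 : ∑ j ∈ Finset.Ico 1 i, (q - 1) * q ^ j
          ≤ ∑ j ∈ Finset.range i, (q - 1) * q ^ j := by
        apply Finset.sum_le_sum_of_subset
        rw [Finset.range_eq_Ico]
        exact Finset.Ico_subset_Ico (by omega) le_rfl
      have hb3 : ∑ j ∈ Finset.range i, (q - 1) * q ^ j
          = (∑ j ∈ Finset.range i, q ^ j) * (q - 1) := by
        rw [Finset.sum_mul]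
        apply Finset.sum_congr rfl
        intro t ht
        rw [mul_comm]
      have hg := geo_nat q hq1 i
      omega
    have hPσ : q ^ (m - i) ≤ σ * q ^ (m - i) := Nat.le_mul_of_pos_left _ (by omega)
    obtain ⟨c', hc'⟩ : ∃ c', σ * q ^ (m - i) - Hi = c' + 1 :=
      ⟨σ * q ^ (m - i) - Hi - 1, by omega⟩
    rw [hc']
    have hC : (c' + 1) + Hi = σ * q ^ (m - i) := by omega
    have hqm : q ^ i * q ^ (m - i) = q ^ m := by
      rw [← pow_add]
      congr 1
      omega
    have hσqm : σ * q ^ m = q ^ i * (c' + 1) + q ^ i * Hi := by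
      calc σ * q ^ m = q ^ i * (σ * q ^ (m - i)) := by rw [← hqm]; ring
        _ = q ^ i * ((c' + 1) + Hi) := by rw [← hC]
        _ = _ := by ring
    have hD : dr + v r * Lo = v r * (q ^ i * (c' + 1)) := by
      have h3 : v r * S = v r * Lo + v r * (q ^ i * Hi) := by rw [hsplit]; ring
      have h4 : v r * (σ * q ^ m) = v r * (q ^ i * (c' + 1)) + v r * (q ^ i * Hi) := by
        rw [hσqm]; ring
      omega
    have h6 : v r * Lo < q ^ i * v r := by
      calc v r * Lo < v r * q ^ i := mul_lt_mul_of_pos_left hLo hvr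
        _ = q ^ i * v r := by ring
    have hnat1 : c' * (q ^ i * v r) < dr := by
      have h5 : v r * (q ^ i * (c' + 1)) = c' * (q ^ i * v r) + q ^ i * v r := by ring
      omega
    have hnat2 : dr ≤ (c' + 1) * (q ^ i * v r) := by
      have h5 : v r * (q ^ i * (c' + 1)) = (c' + 1) * (q ^ i * v r) := by ring
      omega
    have hXQ : (0 : ℚ) < (q : ℚ) ^ i * (v r : ℚ) := by
      have h7 : (0 : ℚ) < (v r : ℚ) := by exact_mod_cast hvr
      positivity
    rw [Nat.ceil_eq_iff (by omega)]
    constructor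
    · rw [lt_div_iff₀ hXQ]
      have h8 : c' + 1 - 1 = c' := rfl
      rw [h8]
      exact_mod_cast hnat1
    · rw [div_le_iff₀ hXQ]
      exact_mod_cast hnat2
  rw [Finset.sum_congr rfl hceil]
  -- geometric sum identity
  have hsumgeo : ∑ i ∈ Finset.Icc 1 m, q ^ (m - i) = v m := by
    rw [hv' m, ← Finset.Ico_add_one_right_eq_Icc, Finset.sum_Ico_eq_sum_range]
    have h8 : m + 1 - 1 = m := rfl
    rw [h8]
    calc ∑ t ∈ Finset.range m, q ^ (m - (1 + t))
        = ∑ t ∈ Finset.range m, q ^ (m - 1 - t) := by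
          apply Finset.sum_congr rfl
          intro t ht
          congr 1
          omega
      _ = ∑ t ∈ Finset.range m, q ^ t := Finset.sum_range_reflect _ _
  -- swap the double sum
  have hswap : ∑ i ∈ Finset.Icc 1 m,
      (∑ j ∈ Finset.Ico i m, ε (j + (r - 1)) * q ^ (j - i)) = T := by
    rw [← Finset.Ico_add_one_right_eq_Icc, Finset.sum_Ico_succ_top hm1, Finset.Ico_self,
      Finset.sum_empty, add_zero, Finset.sum_Ico_Ico_comm]
    have hin : ∀ j ∈ Finset.Ico 1 m,
        ∑ i ∈ Finset.Ico 1 (j + 1), ε (j + (r - 1)) * q ^ (j - i)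
          = ε (j + (r - 1)) * v j := by
      intro j hj
      rw [← Finset.mul_sum]
      congr 1
      rw [Finset.sum_Ico_eq_sum_range, hv' j]
      have h8 : j + 1 - 1 = j := rfl
      rw [h8]
      calc ∑ t ∈ Finset.range j, q ^ (j - (1 + t))
          = ∑ t ∈ Finset.range j, q ^ (j - 1 - t) := by
            apply Finset.sum_congr rfl
            intro t ht
            congr 1
            omega
        _ = ∑ t ∈ Finset.range j, q ^ t := Finset.sum_range_reflect _ _
    rw [Finset.sum_congr rfl hin, hTdef]
    apply Finset.sum_congr _ (fun _ _ => rfl)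
    rw [← Finset.Ico_add_one_right_eq_Icc]
    congr 1
    omega
  have hfin : ∑ i ∈ Finset.Icc 1 m,
      (σ * q ^ (m - i) - ∑ j ∈ Finset.Ico i m, ε (j + (r - 1)) * q ^ (j - i)) + T
      = σ * v m := by
    rw [← hswap, ← Finset.sum_add_distrib]
    have hpt : ∀ i ∈ Finset.Icc 1 m,
        (σ * q ^ (m - i) - ∑ j ∈ Finset.Ico i m, ε (j + (r - 1)) * q ^ (j - i))
          + ∑ j ∈ Finset.Ico i m, ε (j + (r - 1)) * q ^ (j - i) = σ * q ^ (m - i) := by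
      intro i hi
      simp only [Finset.mem_Icc] at hi
      have h9 := hHib i hi.1 hi.2
      have hPσ : q ^ (m - i) ≤ σ * q ^ (m - i) := Nat.le_mul_of_pos_left _ (by omega)
      omega
    rw [Finset.sum_congr rfl hpt, ← Finset.mul_sum, hsumgeo]
  omega
end

section
/- Let q be a prime power, k ≥ 2, and let d = σ·q^{k−1} − Σ_{i=0}^{k−2} ε_i·q^i with σ ≥ 1, 0 ≤ ε_i ≤ q−1, and d > 0. For 1 ≤ r ≤ k, define d_r = v_r·(σ·q^{k−r} − Σ_{i=r}^{k−1} ε_{i−1}·q^{i−r}) − Σ_{i=1}^{r−1} ε_{i−1}·v_i (so d_1 = d). Then d_r + Σ_{i=1}^{k−r} ⌈d_r/(q^i·v_r)⌉ = σ·v_k − Σ_{i=1}^{k−1} ε_{i−1}·v_i = Σ_{i=0}^{k−1} ⌈d/q^i⌉. In other words, the generalized Griesmer bound for the r-th weight of a Griesmer code coincides with the classical Griesmer bound value g_q(k,d). -/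
open Finset

private lemma geom_aux (e : ℕ) : ∀ t, e * (∑ i ∈ Finset.range t, (e+1)^i) + 1 = (e+1)^t := by
  intro t
  induction t with
  | zero => simp
  | succ t ih =>
    rw [Finset.sum_range_succ, pow_succ]
    calc e * ((∑ i ∈ Finset.range t, (e+1)^i) + (e+1)^t) + 1
        = (e * (∑ i ∈ Finset.range t, (e+1)^i) + 1) + e * (e+1)^t := by ring
      _ = (e+1)^t + e * (e+1)^t := by rw [ih]
      _ = (e+1)^t * (e+1) := by ring

private lemma ceil_aux {M n c : ℕ} (R : ℕ) (hc : 0 < c) (hR : R < c) (h : M + R = n * c) :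
    ⌈(M : ℚ) / (c : ℚ)⌉₊ = n := by
  have hc' : (0:ℚ) < (c:ℚ) := by exact_mod_cast hc
  rcases Nat.eq_zero_or_pos n with rfl | hn
  · have hM : M = 0 := by omega
    simp [hM]
  · apply le_antisymm
    · rw [Nat.ceil_le, div_le_iff₀ hc']
      have hle : M ≤ n * c := by omega
      exact_mod_cast hle
    · have hx : (n-1)*c + c = n*c := by
        have h1 : n - 1 + 1 = n := by omega
        calc (n-1)*c + c = (n-1+1)*c := by ring
          _ = n*c := by rw [h1]
      have h2 : (n-1)*c < M := by omega
      have h3 : (n-1 : ℕ) < ⌈(M:ℚ)/(c:ℚ)⌉₊ := by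
        rw [Nat.lt_ceil, lt_div_iff₀ hc']
        exact_mod_cast h2
      omega

private lemma bound_aux {q : ℕ} (hq : 1 ≤ q) (t : ℕ) (f : ℕ → ℕ)
    (hf : ∀ j < t, f j ≤ q - 1) :
    (∑ j ∈ Finset.range t, f j * q ^ j) + 1 ≤ q ^ t := by
  obtain ⟨e, rfl⟩ : ∃ e, q = e + 1 := ⟨q - 1, by omega⟩
  have h1 : ∑ j ∈ Finset.range t, f j * (e+1) ^ j
      ≤ ∑ j ∈ Finset.range t, e * (e+1) ^ j := by
    refine Finset.sum_le_sum fun j hj => Nat.mul_le_mul_right _ ?_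
    have := hf j (Finset.mem_range.mp hj)
    omega
  have h2 := geom_aux e t
  rw [Finset.mul_sum] at h2
  omega

private lemma swapB (q : ℕ) (g : ℕ → ℕ) :
    ∀ M, ∑ i ∈ Finset.range (M+1), ∑ j ∈ Finset.range (M-i), g (i+j) * q^j
      = ∑ t ∈ Finset.range M, g t * ∑ x ∈ Finset.range (t+1), q^x := by
  intro M
  induction M with
  | zero => simp
  | succ M ih =>
    rw [Finset.sum_range_succ, show M + 1 - (M+1) = 0 from by omega]
    simp only [Finset.range_zero, Finset.sum_empty, add_zero]
    have hsplit : ∑ i ∈ Finset.range (M+1), ∑ j ∈ Finset.range (M+1-i), g (i+j) * q^j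
        = ∑ i ∈ Finset.range (M+1),
            ((∑ j ∈ Finset.range (M-i), g (i+j) * q^j) + g M * q^(M-i)) := by
      refine Finset.sum_congr rfl fun i hi => ?_
      have hi' : i ≤ M := by
        have := Finset.mem_range.mp hi; omega
      rw [show M+1-i = (M-i)+1 from by omega, Finset.sum_range_succ,
        show i + (M-i) = M from by omega]
    have hrefl : ∑ i ∈ Finset.range (M+1), g M * q^(M-i)
        = g M * ∑ x ∈ Finset.range (M+1), q^x := by
      rw [← Finset.mul_sum]
      congr 1
      have := Finset.sum_range_reflect (fun j => q^j) (M+1)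
      simpa using this
    rw [hsplit, Finset.sum_add_distrib, ih, hrefl,
      Finset.sum_range_succ (fun t => g t * ∑ x ∈ Finset.range (t+1), q^x) M]

private lemma swapA (q : ℕ) (g : ℕ → ℕ) (M : ℕ) :
    ∑ i ∈ Finset.range M, ∑ j ∈ Finset.range (M-1-i), g (i+j) * q^j
      = ∑ t ∈ Finset.range (M-1), g t * ∑ x ∈ Finset.range (t+1), q^x := by
  cases M with
  | zero => simp
  | succ M => simpa using swapB q g M

/-- A code attaining the classical Griesmer bound attains the generalized Griesmer bound for
all `r`: with `q` a prime power, `k ≥ 2`, `d = σ·q^{k−1} − Σ_{i=0}^{k−2} ε_i·q^i > 0`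
(`σ ≥ 1`, `0 ≤ ε_i ≤ q−1`), `1 ≤ r ≤ k`, and
`d_r = v_r·(σ·q^{k−r} − Σ_{i=r}^{k−1} ε_{i−1}·q^{i−r}) − Σ_{i=1}^{r−1} ε_{i−1}·v_i`
(all stated additively), one has
`d_r + Σ_{i=1}^{k−r} ⌈d_r/(q^i·v_r)⌉ = σ·v_k − Σ_{i=1}^{k−1} ε_{i−1}·v_i
 = Σ_{i=0}^{k−1} ⌈d/q^i⌉`, where `v_m = (q^m−1)/(q−1)`. -/
theorem stmt18 (q k r σ d dr : ℕ) (ε : ℕ → ℕ)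
    (hq : IsPrimePow q) (hk : 2 ≤ k) (hσ : 1 ≤ σ) (hr1 : 1 ≤ r) (hrk : r ≤ k)
    (hε : ∀ i ≤ k - 2, ε i ≤ q - 1)
    (v : ℕ → ℕ) (hv : ∀ m, v m = (q ^ m - 1) / (q - 1))
    (hd : d + ∑ i ∈ Finset.range (k - 1), ε i * q ^ i = σ * q ^ (k - 1))
    (hdpos : 0 < d)
    (hdr : dr + v r * (∑ i ∈ Finset.Icc r (k - 1), ε (i - 1) * q ^ (i - r))
        + ∑ i ∈ Finset.Icc 1 (r - 1), ε (i - 1) * v i = v r * (σ * q ^ (k - r))) :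
    dr + ∑ i ∈ Finset.Icc 1 (k - r), ⌈(dr : ℚ) / ((q : ℚ) ^ i * (v r : ℚ))⌉₊
        + ∑ i ∈ Finset.Icc 1 (k - 1), ε (i - 1) * v i = σ * v k ∧
    dr + ∑ i ∈ Finset.Icc 1 (k - r), ⌈(dr : ℚ) / ((q : ℚ) ^ i * (v r : ℚ))⌉₊
        = ∑ i ∈ Finset.range k, ⌈(d : ℚ) / (q : ℚ) ^ i⌉₊ := by
  obtain ⟨a, rfl⟩ : ∃ a, r = a + 1 := ⟨r - 1, by omega⟩
  obtain ⟨m, rfl⟩ : ∃ m, k = a + 1 + m := ⟨k - (a + 1), by omega⟩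
  have hq2 : 2 ≤ q := hq.two_le
  -- v as a geometric sum
  have hvs : ∀ t, v t = ∑ i ∈ Finset.range t, q ^ i := by
    intro t
    rw [hv]
    obtain ⟨e, rfl⟩ : ∃ e, q = e + 1 := ⟨q - 1, by omega⟩
    have h := geom_aux e t
    have h2 : (e + 1) ^ t - 1 = e * ∑ i ∈ Finset.range t, (e+1) ^ i := by
      rw [← h, Nat.add_sub_cancel]
    rw [Nat.add_sub_cancel, h2, Nat.mul_div_cancel_left _ (by omega : 0 < e)]
  have hvadd : ∀ b c, v (b + c) = v b + q ^ b * v c := by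
    intro b c
    rw [hvs, hvs, hvs, Finset.sum_range_add]
    congr 1
    rw [Finset.mul_sum]
    exact Finset.sum_congr rfl fun x _ => pow_add q b x
  have hv0 : v 0 = 0 := by rw [hvs]; simp
  have hvpos : 0 < v (a + 1) := by
    rw [hvs]
    exact Finset.sum_pos (fun i _ => pow_pos (by omega) i) (by simp)
  -- normalize the subtraction constants
  simp only [show a + 1 + m - 1 = a + m from by omega,
    show a + 1 - 1 = a from by omega,
    show a + 1 + m - (a + 1) = m from by omega] at hd hdr ⊢
  -- Icc to range conversion
  have hIccr : ∀ (n : ℕ) (f : ℕ → ℕ),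
      ∑ i ∈ Finset.Icc 1 n, f i = ∑ i ∈ Finset.range n, f (1 + i) := by
    intro n f
    rw [← Finset.Ico_add_one_right_eq_Icc, Finset.sum_Ico_eq_sum_range]
    simp
  -- rewrite hdr into range form
  have hIccSm : ∑ i ∈ Finset.Icc (a+1) (a+m), ε (i-1) * q^(i-(a+1))
      = ∑ t ∈ Finset.range m, ε (a+t) * q^t := by
    rw [← Finset.Ico_add_one_right_eq_Icc, Finset.sum_Ico_eq_sum_range,
      show a+m+1-(a+1) = m from by omega]
    exact Finset.sum_congr rfl fun x _ => by
      rw [show a+1+x-1 = a+x from by omega, show a+1+x-(a+1) = x from by omega]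
  have hIccT0 : ∑ i ∈ Finset.Icc 1 a, ε (i-1) * v i
      = ∑ t ∈ Finset.range a, ε t * v (t+1) := by
    rw [hIccr]
    exact Finset.sum_congr rfl fun x _ => by
      rw [show 1+x-1 = x from by omega, show 1+x = x+1 from by omega]
  rw [hIccSm, hIccT0] at hdr
  -- bound on T
  have hT : (∑ t ∈ Finset.range a, ε t * v (t+1)) + 1 ≤ v (a+1) := by
    have h1 : ∑ t ∈ Finset.range a, ε t * v (t+1)
        ≤ ∑ t ∈ Finset.range a, q^(t+1) := by
      refine Finset.sum_le_sum fun t ht => ?_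
      have ht' : t < a := Finset.mem_range.mp ht
      have hε1 : ε t ≤ q - 1 := hε t (by omega)
      have h2 : ε t * v (t+1) ≤ (q-1) * v (t+1) := Nat.mul_le_mul_right _ hε1
      have h3 : (q-1) * v (t+1) + 1 = q^(t+1) := by
        rw [hvs]
        obtain ⟨e, rfl⟩ : ∃ e, q = e + 1 := ⟨q - 1, by omega⟩
        rw [Nat.add_sub_cancel]
        exact geom_aux e (t+1)
      omega
    have h4 : v (a+1) = (∑ t ∈ Finset.range a, q^(t+1)) + 1 := by
      rw [hvs, Finset.sum_range_succ']
      simp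
    omega
  -- key per-term ceiling computation for goal 1
  have key1 : ∀ i, i < m →
      ⌈(dr:ℚ) / ((q:ℚ)^(1+i) * (v (a+1):ℚ))⌉₊
        = σ * q^(m-1-i) - (∑ j ∈ Finset.range (m-1-i), ε (a+1+(i+j)) * q^j)
      ∧ (∑ j ∈ Finset.range (m-1-i), ε (a+1+(i+j)) * q^j) ≤ σ * q^(m-1-i) := by
    intro i him
    have h := hdr
    rw [show m = 1+i+(m-1-i) from by omega, Finset.sum_range_add] at h
    have h2 : ∑ x ∈ Finset.range (m-1-i), ε (a+(1+i+x)) * q^(1+i+x)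
        = q^(1+i) * ∑ x ∈ Finset.range (m-1-i), ε (a+1+(i+x)) * q^x := by
      rw [Finset.mul_sum]
      refine Finset.sum_congr rfl fun x _ => ?_
      rw [show a+(1+i+x) = a+1+(i+x) from by omega, pow_add]
      ring
    rw [h2, pow_add q (1+i) (m-1-i)] at h
    set V := v (a+1) with hVdef
    set P := ∑ x ∈ Finset.range (1+i), ε (a+x) * q^x with hPdef
    set Q := ∑ x ∈ Finset.range (m-1-i), ε (a+1+(i+x)) * q^x with hQdef
    set T := ∑ t ∈ Finset.range a, ε t * v (t+1) with hTdef
    -- h : dr + V * (P + q^(1+i) * Q) + T = V * (σ * (q^(1+i) * q^(m-1-i)))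
    have hc0 : 0 < q ^ (1+i) * V := Nat.mul_pos (pow_pos (by omega) _) hvpos
    have hQle : Q ≤ σ * q ^ (m-1-i) := by
      have h4 : (q^(1+i) * V) * Q ≤ (q^(1+i) * V) * (σ * q^(m-1-i)) := by
        calc (q^(1+i)*V) * Q = V*(q^(1+i)*Q) := by ring
          _ ≤ V*(P + q^(1+i)*Q) := mul_le_mul_right (Nat.le_add_left _ _) V
          _ ≤ dr + V*(P + q^(1+i)*Q) := Nat.le_add_left _ _
          _ ≤ dr + V*(P + q^(1+i)*Q) + T := Nat.le_add_right _ _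
          _ = V * (σ * (q^(1+i) * q^(m-1-i))) := h
          _ = (q^(1+i)*V) * (σ * q^(m-1-i)) := by ring
      exact Nat.le_of_mul_le_mul_left h4 hc0
    have hsub : (σ * q^(m-1-i) - Q) + Q = σ * q^(m-1-i) := Nat.sub_add_cancel hQle
    have h5 : dr + (V*P + T) + (q^(1+i)*V)*Q
        = (σ*q^(m-1-i) - Q)*(q^(1+i)*V) + (q^(1+i)*V)*Q := by
      calc dr + (V*P + T) + (q^(1+i)*V)*Q
          = dr + V*(P + q^(1+i)*Q) + T := by ring
        _ = V * (σ*(q^(1+i) * q^(m-1-i))) := h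
        _ = ((σ*q^(m-1-i) - Q) + Q)*(q^(1+i)*V) := by rw [hsub]; ring
        _ = _ := by ring
    have h6 : dr + (V*P + T) = (σ*q^(m-1-i) - Q)*(q^(1+i)*V) := Nat.add_right_cancel h5
    have hPb : P + 1 ≤ q^(1+i) := by
      refine bound_aux (by omega) (1+i) (fun j => ε (a+j)) fun j hj => ?_
      exact hε (a+j) (by omega)
    have hRlt : V*P + T < q^(1+i)*V := by
      have h7 : V*P + T + 1 ≤ q^(1+i)*V := by
        calc V*P + T + 1 = V*P + (T+1) := by ring
          _ ≤ V*P + V := Nat.add_le_add_left hT _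
          _ = V*(P+1) := by ring
          _ ≤ V*q^(1+i) := mul_le_mul_right hPb V
          _ = q^(1+i)*V := by ring
      omega
    refine ⟨?_, hQle⟩
    have hcast : ((q ^ (1+i) * V : ℕ) : ℚ) = (q:ℚ)^(1+i) * (V:ℚ) := by push_cast; ring
    rw [← hcast]
    exact ceil_aux (V*P + T) hc0 hRlt h6
  -- the ceiling sum for goal 1
  have hsum1 : ∑ i ∈ Finset.Icc 1 m, ⌈(dr:ℚ)/((q:ℚ)^i * (v (a+1):ℚ))⌉₊
      = ∑ i ∈ Finset.range m,
          (σ * q^(m-1-i) - ∑ j ∈ Finset.range (m-1-i), ε (a+1+(i+j)) * q^j) := by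
    rw [hIccr]
    exact Finset.sum_congr rfl fun i hi => (key1 i (Finset.mem_range.mp hi)).1
  -- hA : ∑ N + W = σ * v m
  have hA : (∑ i ∈ Finset.range m,
        (σ * q^(m-1-i) - ∑ j ∈ Finset.range (m-1-i), ε (a+1+(i+j)) * q^j))
      + (∑ t ∈ Finset.range (m-1), ε (a+1+t) * v (t+1)) = σ * v m := by
    have h1 : ∑ i ∈ Finset.range m,
        ((σ * q^(m-1-i) - ∑ j ∈ Finset.range (m-1-i), ε (a+1+(i+j)) * q^j)
          + ∑ j ∈ Finset.range (m-1-i), ε (a+1+(i+j)) * q^j)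
        = ∑ i ∈ Finset.range m, σ * q^(m-1-i) :=
      Finset.sum_congr rfl fun i hi =>
        Nat.sub_add_cancel (key1 i (Finset.mem_range.mp hi)).2
    rw [Finset.sum_add_distrib] at h1
    have h2 : ∑ i ∈ Finset.range m,
        ∑ j ∈ Finset.range (m-1-i), ε (a+1+(i+j)) * q^j
        = ∑ t ∈ Finset.range (m-1), ε (a+1+t) * v (t+1) := by
      rw [swapA q (fun t => ε (a+1+t)) m]
      exact Finset.sum_congr rfl fun t _ => by rw [hvs (t+1)]
    have h3 : ∑ i ∈ Finset.range m, σ*q^(m-1-i) = σ * v m := by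
      rw [← Finset.mul_sum]
      congr 1
      rw [hvs]
      have := Finset.sum_range_reflect (fun j => q^j) m
      simpa using this
    rw [← h2, ← h3]
    exact h1
  -- the mixed sum identity
  have hXW : ∑ x ∈ Finset.range m, ε (a+x) * v (a+x+1)
      = (∑ t ∈ Finset.range (m-1), ε (a+1+t) * v (t+1))
        + v (a+1) * (∑ t ∈ Finset.range m, ε (a+t) * q^t) := by
    have h1 : ∀ x : ℕ, v (a+x+1) = v x + q^x * v (a+1) := fun x => by
      rw [show a+x+1 = x+(a+1) from by omega]
      exact hvadd x (a+1)
    calc ∑ x ∈ Finset.range m, ε (a+x) * v (a+x+1)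
        = ∑ x ∈ Finset.range m, (ε (a+x) * v x + v (a+1) * (ε (a+x) * q^x)) := by
          refine Finset.sum_congr rfl fun x _ => ?_
          rw [h1 x]; ring
      _ = (∑ x ∈ Finset.range m, ε (a+x) * v x)
          + v (a+1) * ∑ t ∈ Finset.range m, ε (a+t) * q^t := by
          rw [Finset.sum_add_distrib, Finset.mul_sum]
      _ = _ := by
          congr 1
          cases m with
          | zero => simp
          | succ w =>
            rw [Finset.sum_range_succ']
            simp only [Nat.add_zero, hv0, Nat.mul_zero, add_zero, Nat.add_sub_cancel]
            exact Finset.sum_congr rfl fun x _ => by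
              rw [show a+(x+1) = a+1+x from by omega]
  have hvk : v (a+1+m) = v m + q^m * v (a+1) := by
    rw [show a+1+m = m+(a+1) from by omega]
    exact hvadd m (a+1)
  -- goal 1 in range form
  have hT'split : ∑ x ∈ Finset.range (a+m), ε x * v (x+1)
      = (∑ t ∈ Finset.range a, ε t * v (t+1))
        + ∑ x ∈ Finset.range m, ε (a+x) * v (a+x+1) :=
    Finset.sum_range_add (fun x => ε x * v (x+1)) a m
  have g1range : dr + (∑ i ∈ Finset.range m,
        (σ * q^(m-1-i) - ∑ j ∈ Finset.range (m-1-i), ε (a+1+(i+j)) * q^j))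
      + ∑ x ∈ Finset.range (a+m), ε x * v (x+1) = σ * v (a+1+m) := by
    rw [hT'split, hXW]
    calc dr + (∑ i ∈ Finset.range m,
          (σ * q^(m-1-i) - ∑ j ∈ Finset.range (m-1-i), ε (a+1+(i+j)) * q^j))
        + ((∑ t ∈ Finset.range a, ε t * v (t+1))
          + ((∑ t ∈ Finset.range (m-1), ε (a+1+t) * v (t+1))
            + v (a+1) * (∑ t ∈ Finset.range m, ε (a+t) * q^t)))
        = (dr + v (a+1) * (∑ t ∈ Finset.range m, ε (a+t) * q^t)
            + ∑ t ∈ Finset.range a, ε t * v (t+1))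
          + ((∑ i ∈ Finset.range m,
              (σ * q^(m-1-i) - ∑ j ∈ Finset.range (m-1-i), ε (a+1+(i+j)) * q^j))
            + ∑ t ∈ Finset.range (m-1), ε (a+1+t) * v (t+1)) := by ring
      _ = v (a+1) * (σ * q^m) + σ * v m := by rw [hdr, hA]
      _ = σ * (v m + q^m * v (a+1)) := by ring
      _ = σ * v (a+1+m) := by rw [hvk]
  -- key per-term ceiling computation for goal 2
  have key2 : ∀ i, i < a+1+m →
      ⌈(d:ℚ) / (q:ℚ)^i⌉₊
        = σ * q^(a+1+m-1-i) - (∑ j ∈ Finset.range (a+1+m-1-i), ε (i+j) * q^j)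
      ∧ (∑ j ∈ Finset.range (a+1+m-1-i), ε (i+j) * q^j) ≤ σ * q^(a+1+m-1-i) := by
    intro i hi
    have h := hd
    rw [show a+m = i+(a+1+m-1-i) from by omega, Finset.sum_range_add] at h
    have h2 : ∑ x ∈ Finset.range (a+1+m-1-i), ε (i+x) * q^(i+x)
        = q^i * ∑ x ∈ Finset.range (a+1+m-1-i), ε (i+x) * q^x := by
      rw [Finset.mul_sum]
      refine Finset.sum_congr rfl fun x _ => ?_
      rw [pow_add]; ring
    rw [h2, pow_add q i (a+1+m-1-i)] at h
    set P := ∑ x ∈ Finset.range i, ε x * q^x with hPdef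
    set Q := ∑ x ∈ Finset.range (a+1+m-1-i), ε (i+x) * q^x with hQdef
    -- h : d + (P + q^i * Q) = σ * (q^i * q^(a+1+m-1-i))
    have hc0 : 0 < q ^ i := pow_pos (by omega) _
    have hQle : Q ≤ σ * q ^ (a+1+m-1-i) := by
      have h4 : q^i * Q ≤ q^i * (σ * q^(a+1+m-1-i)) := by
        calc q^i * Q ≤ P + q^i*Q := Nat.le_add_left _ _
          _ ≤ d + (P + q^i*Q) := Nat.le_add_left _ _
          _ = σ * (q^i * q^(a+1+m-1-i)) := h
          _ = q^i * (σ * q^(a+1+m-1-i)) := by ring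
      exact Nat.le_of_mul_le_mul_left h4 hc0
    have hsub : (σ * q^(a+1+m-1-i) - Q) + Q = σ * q^(a+1+m-1-i) :=
      Nat.sub_add_cancel hQle
    have h5 : d + P + q^i*Q = (σ*q^(a+1+m-1-i) - Q)*q^i + q^i*Q := by
      calc d + P + q^i*Q = d + (P + q^i*Q) := by ring
        _ = σ * (q^i * q^(a+1+m-1-i)) := h
        _ = ((σ*q^(a+1+m-1-i) - Q) + Q)*q^i := by rw [hsub]; ring
        _ = _ := by ring
    have h6 : d + P = (σ*q^(a+1+m-1-i) - Q)*q^i := Nat.add_right_cancel h5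
    have hPb : P + 1 ≤ q^i := by
      refine bound_aux (by omega) i ε fun j hj => ?_
      exact hε j (by omega)
    have hRlt : P < q^i := by omega
    refine ⟨?_, hQle⟩
    have hcast : ((q ^ i : ℕ) : ℚ) = (q:ℚ)^i := by push_cast; ring
    rw [← hcast]
    exact ceil_aux P hc0 hRlt h6
  -- sum of ceilings for goal 2
  have hsum2 : ∑ i ∈ Finset.range (a+1+m), ⌈(d:ℚ)/(q:ℚ)^i⌉₊
      = ∑ i ∈ Finset.range (a+1+m),
          (σ * q^(a+1+m-1-i) - ∑ j ∈ Finset.range (a+1+m-1-i), ε (i+j) * q^j) :=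
    Finset.sum_congr rfl fun i hi => (key2 i (Finset.mem_range.mp hi)).1
  have hM : (∑ i ∈ Finset.range (a+1+m),
        (σ * q^(a+1+m-1-i) - ∑ j ∈ Finset.range (a+1+m-1-i), ε (i+j) * q^j))
      + ∑ x ∈ Finset.range (a+m), ε x * v (x+1) = σ * v (a+1+m) := by
    have h1 : ∑ i ∈ Finset.range (a+1+m),
        ((σ * q^(a+1+m-1-i) - ∑ j ∈ Finset.range (a+1+m-1-i), ε (i+j) * q^j)
          + ∑ j ∈ Finset.range (a+1+m-1-i), ε (i+j) * q^j)
        = ∑ i ∈ Finset.range (a+1+m), σ * q^(a+1+m-1-i) :=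
      Finset.sum_congr rfl fun i hi =>
        Nat.sub_add_cancel (key2 i (Finset.mem_range.mp hi)).2
    rw [Finset.sum_add_distrib] at h1
    have h2 : ∑ i ∈ Finset.range (a+1+m),
        ∑ j ∈ Finset.range (a+1+m-1-i), ε (i+j) * q^j
        = ∑ x ∈ Finset.range (a+m), ε x * v (x+1) := by
      rw [swapA q ε (a+1+m), show a+1+m-1 = a+m from by omega]
      exact Finset.sum_congr rfl fun t _ => by rw [hvs (t+1)]
    have h3 : ∑ i ∈ Finset.range (a+1+m), σ*q^(a+1+m-1-i) = σ * v (a+1+m) := by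
      rw [← Finset.mul_sum]
      congr 1
      rw [hvs]
      have := Finset.sum_range_reflect (fun j => q^j) (a+1+m)
      simpa using this
    rw [← h2, ← h3]
    exact h1
  -- convert goal's Icc sums
  have hIccT : ∑ i ∈ Finset.Icc 1 (a+m), ε (i-1) * v i
      = ∑ x ∈ Finset.range (a+m), ε x * v (x+1) := by
    rw [hIccr]
    exact Finset.sum_congr rfl fun x _ => by
      rw [show 1+x-1 = x from by omega, show 1+x = x+1 from by omega]
  rw [hIccT, hsum1]
  constructor
  · exact g1range
  · rw [hsum2]
    have e := g1range.trans hM.symm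
    exact Nat.add_right_cancel e
end
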